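/- arXiv:2305.04917 — 14 statements merged into one kernel-verified Lean document; each statement's English description precedes it below -/
import Mathlib

section
/- Sublinear rate for alternating minimization under the five-point property: under assumption (A1), if φ satisfies the five-point property (FP), then the alternating minimization iterates started from y_0 ∈ Y with x_0 = S(y_0) satisfy, for every x ∈ X, y ∈ Y and every n ≥ 1, φ(x_n, y_n) ≤ φ(x,y) + (φ(x,y_0) − φ(x_0,y_0))/n. -/
/-- **Sublinear rate for alternating minimization under the five-point property.**
Under assumption (A1) (encoded by the unique-minimizer maps `T : X → Y` and
`S : Y → X`), if `φ` satisfies the five-point property (FP), then the alternating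
minimization iterates started from `y 0`, with `x n = S (y n)` and
`y (n+1) = T (x n)`, satisfy for every `x' ∈ X`, `y' ∈ Y` and every `n ≥ 1`:
`φ (x n) (y n) ≤ φ x' y' + (φ x' (y 0) - φ (x 0) (y 0)) / n`. -/
theorem alternating_minimization_sublinear_rate
    {X Y : Type*} [Nonempty X] [Nonempty Y]
    (φ : X → Y → ℝ)
    (hbdd : BddBelow (Set.range fun p : X × Y => φ p.1 p.2))
    (T : X → Y) (S : Y → X)
    (hT : ∀ x y, φ x (T x) ≤ φ x y)
    (hTuniq : ∀ x y, (∀ y', φ x y ≤ φ x y') → y = T x)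
    (hS : ∀ y x, φ (S y) y ≤ φ x y)
    (hSuniq : ∀ y x, (∀ x', φ x y ≤ φ x' y) → x = S y)
    (hFP : ∀ (x : X) (y y₀ : Y),
      φ x (T (S y₀)) + φ (S y₀) y₀ ≤ φ x y + φ x y₀)
    (x : ℕ → X) (y : ℕ → Y)
    (hx : ∀ n, x n = S (y n))
    (hy : ∀ n, y (n + 1) = T (x n)) :
    ∀ (x' : X) (y' : Y) (n : ℕ), 1 ≤ n →
      φ (x n) (y n) ≤ φ x' y' + (φ x' (y 0) - φ (x 0) (y 0)) / (n : ℝ) := by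
  intro x' y' n hn
  have step : ∀ k, φ (x k) (y k) ≤ φ x' y' + φ x' (y k) - φ x' (y (k+1)) := by
    intro k
    have h := hFP x' y' (y k)
    rw [← hx k, ← hy k] at h
    linarith
  have mono : ∀ k, φ (x (k+1)) (y (k+1)) ≤ φ (x k) (y k) := by
    intro k
    have h1 : φ (x (k+1)) (y (k+1)) ≤ φ (x k) (y (k+1)) := by
      rw [hx (k+1)]; exact hS _ _
    have h2 : φ (x k) (y (k+1)) ≤ φ (x k) (y k) := by
      rw [hy k]; exact hT _ _
    exact h1.trans h2
  have mono' : ∀ k m, k ≤ m → φ (x m) (y m) ≤ φ (x k) (y k) := by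
    intro k m hkm
    induction m with
    | zero => simp_all
    | succ m ih =>
      rcases Nat.eq_or_lt_of_le hkm with h | h
      · rw [h]
      · exact (mono m).trans (ih (Nat.lt_succ_iff.mp h))
  have ban : ∀ k, φ (x k) (y k) ≤ φ x' (y k) := by
    intro k; rw [hx k]; exact hS _ _
  have sum : ∀ m : ℕ, (∑ k ∈ Finset.Ico 1 (m+1), φ (x k) (y k)) ≤
      m * φ x' y' + φ x' (y 1) - φ x' (y (m+1)) := by
    intro m
    induction m with
    | zero => simp
    | succ m ih =>
      rw [Finset.sum_Ico_succ_top (by omega)]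
      have := step (m+1)
      push_cast
      linarith
  -- apply at m = n - 1
  obtain ⟨m, rfl⟩ : ∃ m, n = m + 1 := ⟨n - 1, by omega⟩
  have hsum := sum m
  have hlow : (m : ℝ) * φ (x (m+1)) (y (m+1)) ≤ ∑ k ∈ Finset.Ico 1 (m+1), φ (x k) (y k) := by
    calc (m : ℝ) * φ (x (m+1)) (y (m+1))
        = ∑ k ∈ Finset.Ico 1 (m+1), φ (x (m+1)) (y (m+1)) := by
          rw [Finset.sum_const, Nat.card_Ico]; push_cast; ring
      _ ≤ _ := Finset.sum_le_sum fun k hk => mono' k (m+1)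
          (by simp at hk; omega)
  have hb1 : φ x' (y 1) ≤ φ x' y' + φ x' (y 0) - φ (x 0) (y 0) := by
    have := step 0; linarith
  have hbn : φ (x (m+1)) (y (m+1)) ≤ φ x' (y (m+1)) := ban (m+1)
  have key : ((m:ℝ)+1) * φ (x (m+1)) (y (m+1)) ≤
      ((m:ℝ)+1) * φ x' y' + (φ x' (y 0) - φ (x 0) (y 0)) := by linarith
  have hpos : (0:ℝ) < (m:ℝ)+1 := by positivity
  push_cast
  rw [← sub_le_iff_le_add', le_div_iff₀ hpos]
  nlinarith [key]
end

section
/- Linear rate for alternating minimization under the strong five-point property: let λ ∈ (0,1) and set Λ = (1−λ)^{−1} > 1. Under assumption (A1), if φ satisfies the λ-strong five-point property (λ-FP), then the alternating minimization iterates started from y_0 ∈ Y with x_0 = S(y_0) satisfy, for every x ∈ X, y ∈ Y and every n ≥ 1, φ(x_n, y_n) ≤ φ(x,y) + λ·(φ(x,y_0) − φ(x_0,y_0))/(Λ^n − 1). -/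
/-- **Linear rate for alternating minimization under the strong five-point property.**
Let `λ ∈ (0,1)` and `Λ = (1-λ)⁻¹`. Under assumption (A1) (encoded by the
unique-minimizer maps `T : X → Y` and `S : Y → X`), if `φ` satisfies the λ-strong
five-point property (λ-FP), then the alternating minimization iterates started
from `y 0`, with `x n = S (y n)` and `y (n+1) = T (x n)`, satisfy for every
`x' ∈ X`, `y' ∈ Y` and every `n ≥ 1`:
`φ (x n) (y n) ≤ φ x' y' + λ (φ x' (y 0) - φ (x 0) (y 0)) / (Λ^n - 1)`. -/
theorem alternating_minimization_linear_rate
    {X Y : Type*} [Nonempty X] [Nonempty Y]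
    (φ : X → Y → ℝ)
    (hbdd : BddBelow (Set.range fun p : X × Y => φ p.1 p.2))
    (lam : ℝ) (hlam0 : 0 < lam) (hlam1 : lam < 1)
    (T : X → Y) (S : Y → X)
    (hT : ∀ x y, φ x (T x) ≤ φ x y)
    (hTuniq : ∀ x y, (∀ y', φ x y ≤ φ x y') → y = T x)
    (hS : ∀ y x, φ (S y) y ≤ φ x y)
    (hSuniq : ∀ y x, (∀ x', φ x y ≤ φ x' y) → x = S y)
    (hFP : ∀ (x : X) (y y₀ : Y),
      φ x (T (S y₀)) + (1 - lam) * φ (S y₀) y₀ ≤ φ x y + (1 - lam) * φ x y₀)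
    (x : ℕ → X) (y : ℕ → Y)
    (hx : ∀ n, x n = S (y n))
    (hy : ∀ n, y (n + 1) = T (x n)) :
    ∀ (x' : X) (y' : Y) (n : ℕ), 1 ≤ n →
      φ (x n) (y n) ≤ φ x' y' +
        lam * (φ x' (y 0) - φ (x 0) (y 0)) / ((1 - lam)⁻¹ ^ n - 1) := by
  intro x' y' n hn
  have hμ0 : (0:ℝ) < 1 - lam := by linarith
  have hμne : (1 - lam) ≠ 0 := ne_of_gt hμ0
  set Λ : ℝ := (1 - lam)⁻¹ with hΛdef
  have hΛ0 : (0:ℝ) < Λ := inv_pos.mpr hμ0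
  have hμΛ : (1 - lam) * Λ = 1 := mul_inv_cancel₀ hμne
  have hΛ1 : (1:ℝ) < Λ := by nlinarith [hμΛ, mul_pos hlam0 hΛ0]
  set a : ℕ → ℝ := fun k => φ (x k) (y k) with ha
  set b : ℕ → ℝ := fun k => φ x' (y k) with hb
  set c : ℝ := φ x' y' with hc
  -- step inequality
  have hstep : ∀ k, b (k+1) + (1 - lam) * a k ≤ c + (1 - lam) * b k := by
    intro k
    have h := hFP x' y' (y k)
    rw [← hx k, ← hy k] at h
    simp only [ha, hb, hc]
    exact h
  -- monotonicity of a
  have hmono : ∀ k, a (k+1) ≤ a k := by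
    intro k
    have h1 : φ (x (k+1)) (y (k+1)) ≤ φ (x k) (y (k+1)) := by
      rw [hx (k+1)]; exact hS _ _
    have h2 : φ (x k) (y (k+1)) ≤ φ (x k) (y k) := by
      rw [hy k]; exact hT _ _
    simp only [ha]
    linarith
  -- a k ≤ b k
  have hab : ∀ k, a k ≤ b k := by
    intro k
    simp only [ha, hb]
    rw [hx k]; exact hS _ _
  -- key induction
  have key : ∀ m, (Λ - 1) * Λ^(m+1) * (b (m+1) - c) + (Λ^(m+1) - Λ) * (a (m+1) - c)
      ≤ (Λ - 1) * (b 0 - a 0) := by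
    intro m
    induction m with
    | zero =>
      have h1 : b 1 - c ≤ (1 - lam) * (b 0 - a 0) := by
        have := hstep 0; nlinarith
      have hpos : (0:ℝ) ≤ (Λ - 1) * Λ := mul_nonneg (by linarith) hΛ0.le
      have h2 := mul_le_mul_of_nonneg_left h1 hpos
      have h3 : (Λ - 1) * Λ * ((1 - lam) * (b 0 - a 0)) = (Λ - 1) * (b 0 - a 0) := by
        linear_combination ((Λ - 1) * (b 0 - a 0)) * hμΛ
      simp only [zero_add, pow_one]
      linarith [h2, h3]
    | succ m ih =>
      set P : ℝ := Λ^(m+1) with hP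
      have hP0 : (0:ℝ) < P := pow_pos hΛ0 _
      have hP1 : (1:ℝ) ≤ P := one_le_pow₀ hΛ1.le
      have hpow : Λ^(m+1+1) = P * Λ := by rw [pow_succ]
      rw [hpow]
      have h1 : b (m+1+1) - c ≤ (1 - lam) * (b (m+1) - c) - (1 - lam) * (a (m+1) - c) := by
        have := hstep (m+1); nlinarith
      have hcoef : (0:ℝ) ≤ (Λ - 1) * (P * Λ) :=
        mul_nonneg (by linarith) (mul_pos hP0 hΛ0).le
      have hA := mul_le_mul_of_nonneg_left h1 hcoef
      have hAeq : (Λ - 1) * (P * Λ) * ((1 - lam) * (b (m+1) - c) - (1 - lam) * (a (m+1) - c))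
          = (Λ - 1) * P * (b (m+1) - c) - (Λ - 1) * P * (a (m+1) - c) := by
        linear_combination ((Λ - 1) * P * ((b (m+1) - c) - (a (m+1) - c))) * hμΛ
      have hBc : (0:ℝ) ≤ P * Λ - Λ := by nlinarith
      have h2 : a (m+1+1) - c ≤ a (m+1) - c := by linarith [hmono (m+1)]
      have hB := mul_le_mul_of_nonneg_left h2 hBc
      nlinarith [hA, hAeq, hB, ih]
  -- conclude
  obtain ⟨m, rfl⟩ : ∃ m, n = m + 1 := ⟨n - 1, by omega⟩
  have K := key m
  set P : ℝ := Λ^(m+1) with hP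
  have hP1 : (1:ℝ) < P := one_lt_pow₀ hΛ1 (Nat.succ_ne_zero m)
  have hQ : (Λ - 1) * P * (a (m+1) - c) ≤ (Λ - 1) * P * (b (m+1) - c) :=
    mul_le_mul_of_nonneg_left (by linarith [hab (m+1)])
      (mul_nonneg (by linarith) (by positivity))
  have hΛm1 : Λ - 1 = lam * Λ := by nlinarith [hμΛ]
  have hE : (Λ - 1) * (b 0 - a 0) = lam * Λ * (b 0 - a 0) := by rw [hΛm1]
  have hsum : Λ * ((P - 1) * (a (m+1) - c)) ≤ Λ * (lam * (b 0 - a 0)) := by nlinarith [K, hQ, hE]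
  have hdiv : (P - 1) * (a (m+1) - c) ≤ lam * (b 0 - a 0) :=
    (mul_le_mul_iff_right₀ hΛ0).mp hsum
  have hden : (0:ℝ) < P - 1 := by linarith
  have hfin : a (m+1) - c ≤ lam * (b 0 - a 0) / (P - 1) := by
    rw [le_div_iff₀ hden]; linarith [hdiv]
  simp only [ha, hb, hc, hP] at hfin
  linarith [hfin]
end

section
/- Explicit form of gradient descent with a general cost: suppose f is c-concave, f and c are differentiable, and assumption (A4) holds. Then for every x̄ ∈ X: if ȳ is the minimizer of y ↦ c(x̄,y) + f^c(y) over Y, then ∇_x c(x̄, ȳ) = ∇f(x̄); and for every ŷ ∈ Y, if x̂ is the minimizer of x ↦ c(x,ŷ) over X, then ∇_x c(x̂, ŷ) = 0. Consequently the alternating minimization updates y_{n+1} = argmin_y c(x_n,y)+f^c(y) and x_{n+1} = argmin_x c(x,y_{n+1})+f^c(y_{n+1}) can be written as ∇_x c(x_n, y_{n+1}) = ∇f(x_n) and ∇_x c(x_{n+1}, y_{n+1}) = 0. -/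
open Set

/-- Euclidean space `ℝ^d`. -/
abbrev Euc (d : ℕ) := EuclideanSpace ℝ (Fin d)

/-- Gradient of the cost `c` in its first variable: `∇ₓ c(x, y)`. -/
noncomputable def gradX {d : ℕ} (c : Euc d → Euc d → ℝ) (x y : Euc d) : Euc d :=
  gradient (fun x' => c x' y) x

/-- **Explicit form of gradient descent with a general cost.**
Suppose `f` is `c`-concave, `f` and `c` are differentiable, and assumption (A4)
holds. Then (1) for every `x̄ ∈ X`, if `ȳ` minimizes `y ↦ c(x̄,y) + f^c(y)` over
`Y` then `∇ₓ c(x̄,ȳ) = ∇f(x̄)`; (2) for every `ŷ ∈ Y`, if `x̂` minimizes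
`x ↦ c(x,ŷ)` over `X` then `∇ₓ c(x̂,ŷ) = 0`. Consequently the alternating
minimization iterates satisfy `∇ₓ c(xₙ, yₙ₊₁) = ∇f(xₙ)` and
`∇ₓ c(xₙ₊₁, yₙ₊₁) = 0`. -/
theorem gd_general_cost_explicit_form {d : ℕ}
    (X Y : Set (Euc d)) (hX : IsOpen X) (hY : IsOpen Y)
    (hXne : X.Nonempty) (hYne : Y.Nonempty)
    (c : Euc d → Euc d → ℝ) (f : Euc d → ℝ)
    (hc : Differentiable ℝ (Function.uncurry c))
    (hf : Differentiable ℝ f)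
    (fc : Euc d → ℝ)
    (hfc : ∀ y ∈ Y, IsLUB ((fun x => f x - c x y) '' X) (fc y))
    (hconc : ∀ x ∈ X, IsGLB ((fun y => c x y + fc y) '' Y) (f x))
    (hA4a : ∀ y ∈ Y, ∃! x, x ∈ X ∧ ∀ x' ∈ X, c x y ≤ c x' y)
    (hA4b : ∀ x ∈ X, ∃! y, y ∈ Y ∧ ∀ y' ∈ Y, c x y + fc y ≤ c x y' + fc y') :
    (∀ xb ∈ X, ∀ yb ∈ Y, (∀ y' ∈ Y, c xb yb + fc yb ≤ c xb y' + fc y') →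
        gradX c xb yb = gradient f xb) ∧
    (∀ yh ∈ Y, ∀ xh ∈ X, (∀ x' ∈ X, c xh yh ≤ c x' yh) →
        gradX c xh yh = 0) ∧
    (∀ x : ℕ → Euc d, ∀ y : ℕ → Euc d,
      (∀ n, x n ∈ X) →
      (∀ n, y (n + 1) ∈ Y ∧
        ∀ y' ∈ Y, c (x n) (y (n + 1)) + fc (y (n + 1)) ≤ c (x n) y' + fc y') →
      (∀ n, ∀ x' ∈ X, c (x (n + 1)) (y (n + 1)) + fc (y (n + 1)) ≤
        c x' (y (n + 1)) + fc (y (n + 1))) →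
      ∀ n, gradX c (x n) (y (n + 1)) = gradient f (x n) ∧
        gradX c (x (n + 1)) (y (n + 1)) = 0) := by

  have hdiff : ∀ yy : Euc d, Differentiable ℝ (fun x => c x yy) := fun yy =>
    hc.comp (differentiable_id.prodMk (differentiable_const yy))
  have part1 : ∀ xb ∈ X, ∀ yb ∈ Y, (∀ y' ∈ Y, c xb yb + fc yb ≤ c xb y' + fc y') →
      gradX c xb yb = gradient f xb := by
    intro xb hxb yb hyb hmin
    have hval : f xb = c xb yb + fc yb := by
      refine le_antisymm ((hconc xb hxb).1 ⟨yb, hyb, rfl⟩) ?_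
      refine (hconc xb hxb).2 ?_
      rintro z ⟨y', hy', rfl⟩
      exact hmin y' hy'
    have hle : ∀ x ∈ X, f x ≤ c x yb + fc yb := fun x hx => (hconc x hx).1 ⟨yb, hyb, rfl⟩
    set g := fun x => c x yb + fc yb - f x with hg
    have hg0 : g xb = 0 := by simp [hg, ← hval]
    have hloc : IsLocalMin g xb := by
      filter_upwards [hX.mem_nhds hxb] with x hx
      rw [hg0]
      have := hle x hx
      simp [hg]; linarith
    have hfd : fderiv ℝ g xb = 0 := hloc.fderiv_eq_zero
    have heq : fderiv ℝ (fun x => c x yb) xb = fderiv ℝ f xb := by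
      have h1 : fderiv ℝ g xb
          = fderiv ℝ (fun x => c x yb + fc yb) xb - fderiv ℝ f xb := by
        exact fderiv_sub (((hdiff yb).add_const _) xb) (hf xb)
      have h2 : fderiv ℝ (fun x => c x yb + fc yb) xb = fderiv ℝ (fun x => c x yb) xb :=
        fderiv_add_const _
      rw [hfd, h2] at h1
      exact (sub_eq_zero.mp h1.symm)
    unfold gradX gradient
    rw [heq]
  have part2 : ∀ yh ∈ Y, ∀ xh ∈ X, (∀ x' ∈ X, c xh yh ≤ c x' yh) →
      gradX c xh yh = 0 := by
    intro yh hyh xh hxh hmin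
    have hloc : IsLocalMin (fun x => c x yh) xh := by
      filter_upwards [hX.mem_nhds hxh] with x hx
      exact hmin x hx
    have hfd : fderiv ℝ (fun x => c x yh) xh = 0 := hloc.fderiv_eq_zero
    unfold gradX gradient
    rw [hfd]
    simp
  refine ⟨part1, part2, ?_⟩
  intro x y hx hy hxmin n
  refine ⟨part1 (x n) (hx n) (y (n+1)) (hy n).1 (hy n).2, ?_⟩
  refine part2 (y (n+1)) (hy n).1 (x (n+1)) (hx (n+1)) ?_
  intro x' hx'
  have := hxmin n x' hx'
  linarith
end

section
/- c-concavity plus cross-convexity implies the five-point property: suppose f and c are differentiable, assumption (A4) holds, and let φ(x,y) = c(x,y) + f^c(y). If f is c-concave and c-cross-convex, then φ satisfies the five-point property (FP). Moreover, for λ > 0, if f is c-concave and λ-strongly c-cross-convex, then φ satisfies the λ-strong five-point property (λ-FP). -/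
open Set

/-- The cross-difference `δ_c(x', y'; x, y) = c(x,y') + c(x',y) - c(x,y) - c(x',y')`. -/
def crossDiff {d : ℕ} (c : Euc d → Euc d → ℝ) (x' y' x y : Euc d) : ℝ :=
  c x y' + c x' y - c x y - c x' y'

/-- The Fréchet derivative of a differentiable function vanishes at a minimizer
over an open set. -/
lemma fderiv_eq_zero_of_min {d : ℕ} {X : Set (Euc d)} (hX : IsOpen X)
    {g : Euc d → ℝ} {x0 : Euc d} (hx0 : x0 ∈ X) (hmin : ∀ x ∈ X, g x0 ≤ g x) :
    fderiv ℝ g x0 = 0 := by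
  have h : IsLocalMin g x0 :=
    Filter.eventually_iff_exists_mem.2 ⟨X, hX.mem_nhds hx0, hmin⟩
  exact h.fderiv_eq_zero

/-- A jointly differentiable cost is differentiable in its first variable. -/
lemma diffX {d : ℕ} {c : Euc d → Euc d → ℝ} (hc : Differentiable ℝ (Function.uncurry c))
    (y : Euc d) : Differentiable ℝ (fun x => c x y) := by
  have : (fun x => c x y) = (Function.uncurry c) ∘ (fun x => (x, y)) := rfl
  rw [this]
  exact hc.comp (differentiable_id.prodMk (differentiable_const y))

/-- **c-concavity plus cross-convexity implies the five-point property.**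
Suppose `f` and `c` are differentiable, (A4) holds, and let
`φ(x,y) = c(x,y) + f^c(y)`. If `f` is `c`-concave and `c`-cross-convex then `φ`
satisfies (FP); moreover for `λ > 0`, if `f` is `c`-concave and λ-strongly
`c`-cross-convex then `φ` satisfies (λ-FP). -/
theorem c_concave_cross_convex_implies_five_point {d : ℕ}
    (X Y : Set (Euc d)) (hX : IsOpen X) (hY : IsOpen Y)
    (hXne : X.Nonempty) (hYne : Y.Nonempty)
    (c : Euc d → Euc d → ℝ) (f : Euc d → ℝ)
    (hc : Differentiable ℝ (Function.uncurry c))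
    (hf : Differentiable ℝ f)
    (fc : Euc d → ℝ)
    (hfc : ∀ y ∈ Y, IsLUB ((fun x => f x - c x y) '' X) (fc y))
    (hconc : ∀ x ∈ X, IsGLB ((fun y => c x y + fc y) '' Y) (f x))
    (hA4a : ∀ y ∈ Y, ∃! x, x ∈ X ∧ ∀ x' ∈ X, c x y ≤ c x' y)
    (hA4b : ∀ x ∈ X, ∃! y, y ∈ Y ∧ ∀ y' ∈ Y, c x y + fc y ≤ c x y' + fc y') :
    -- (i) cross-convexity implies the five-point property of φ = c + f^c
    ((∀ x ∈ X, ∀ xb ∈ X, ∀ yb ∈ Y, ∀ yh ∈ Y,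
        gradX c xb yb = 0 → gradX c xb yh = gradient f xb →
        f xb + crossDiff c x yb xb yh ≤ f x) →
      ∀ x ∈ X, ∀ y ∈ Y, ∀ y0 ∈ Y, ∀ x0, ∀ y1,
        (x0 ∈ X ∧ ∀ x' ∈ X, c x0 y0 + fc y0 ≤ c x' y0 + fc y0) →
        (y1 ∈ Y ∧ ∀ y' ∈ Y, c x0 y1 + fc y1 ≤ c x0 y' + fc y') →
        (c x y1 + fc y1) + (c x0 y0 + fc y0) ≤ (c x y + fc y) + (c x y0 + fc y0)) ∧
    -- (ii) λ-strong cross-convexity implies the λ-strong five-point property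
    (∀ lam : ℝ, 0 < lam →
      (∀ x ∈ X, ∀ xb ∈ X, ∀ yb ∈ Y, ∀ yh ∈ Y,
        gradX c xb yb = 0 → gradX c xb yh = gradient f xb →
        f xb + crossDiff c x yb xb yh + lam * (c x yb - c xb yb) ≤ f x) →
      ∀ x ∈ X, ∀ y ∈ Y, ∀ y0 ∈ Y, ∀ x0, ∀ y1,
        (x0 ∈ X ∧ ∀ x' ∈ X, c x0 y0 + fc y0 ≤ c x' y0 + fc y0) →
        (y1 ∈ Y ∧ ∀ y' ∈ Y, c x0 y1 + fc y1 ≤ c x0 y' + fc y') →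
        (c x y1 + fc y1) + (1 - lam) * (c x0 y0 + fc y0) ≤
          (c x y + fc y) + (1 - lam) * (c x y0 + fc y0)) := by
  -- Common facts: at a minimizer `x0` of `φ(·,y0)` and a minimizer `y1` of
  -- `φ(x0,·)`, the two gradient conditions hold, `f x0 = φ(x0,y1)`, and
  -- `f x ≤ φ(x,y)` everywhere (c-concavity).
  have key : ∀ x ∈ X, ∀ y ∈ Y, ∀ y0 ∈ Y, ∀ x0, ∀ y1,
      (x0 ∈ X ∧ ∀ x' ∈ X, c x0 y0 + fc y0 ≤ c x' y0 + fc y0) →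
      (y1 ∈ Y ∧ ∀ y' ∈ Y, c x0 y1 + fc y1 ≤ c x0 y' + fc y') →
      gradX c x0 y0 = 0 ∧ gradX c x0 y1 = gradient f x0 ∧
      f x0 = c x0 y1 + fc y1 ∧ f x ≤ c x y + fc y := by
    intro x hx y hy y0 hy0 x0 y1 hx0 hy1
    have hfle : ∀ x' ∈ X, ∀ y' ∈ Y, f x' ≤ c x' y' + fc y' := fun x' hx' y' hy' =>
      (hconc x' hx').1 ⟨y', hy', rfl⟩
    have hfx0 : f x0 = c x0 y1 + fc y1 := by
      refine le_antisymm (hfle x0 hx0.1 y1 hy1.1) ?_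
      refine (hconc x0 hx0.1).2 ?_
      rintro v ⟨y', hy', rfl⟩
      exact hy1.2 y' hy'
    have hg0 : gradX c x0 y0 = 0 := by
      have : fderiv ℝ (fun x' => c x' y0) x0 = 0 := by
        refine fderiv_eq_zero_of_min hX hx0.1 ?_
        intro x' hx'
        have := hx0.2 x' hx'
        linarith
      simp [gradX, gradient, this]
    have hg1 : gradX c x0 y1 = gradient f x0 := by
      have hmin : fderiv ℝ (fun x' => c x' y1 - f x') x0 = 0 := by
        refine fderiv_eq_zero_of_min hX hx0.1 ?_
        intro x' hx'
        have h1 := hfle x' hx' y1 hy1.1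
        linarith [hfx0]
      have hsub : fderiv ℝ (fun x' => c x' y1 - f x') x0
          = fderiv ℝ (fun x' => c x' y1) x0 - fderiv ℝ f x0 :=
        fderiv_sub ((diffX hc y1) x0) (hf x0)
      have : fderiv ℝ (fun x' => c x' y1) x0 = fderiv ℝ f x0 :=
        sub_eq_zero.1 (hsub ▸ hmin)
      simp [gradX, gradient, this]
    exact ⟨hg0, hg1, hfx0, hfle x hx y hy⟩
  constructor
  · intro hcc x hx y hy y0 hy0 x0 y1 hx0 hy1
    obtain ⟨hg0, hg1, hfx0, hfle⟩ := key x hx y hy y0 hy0 x0 y1 hx0 hy1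
    have h := hcc x hx x0 hx0.1 y0 hy0 y1 hy1.1 hg0 hg1
    simp only [crossDiff] at h
    linarith
  · intro lam _ hcc x hx y hy y0 hy0 x0 y1 hx0 hy1
    obtain ⟨hg0, hg1, hfx0, hfle⟩ := key x hx y hy y0 hy0 x0 y1 hx0 hy1
    have h := hcc x hx x0 hx0.1 y0 hy0 y1 hy1.1 hg0 hg1
    simp only [crossDiff] at h
    nlinarith [h, hfx0, hfle]
end

section
/- Descent and stopping criterion for gradient descent with a general cost: suppose f and c are differentiable, assumption (A4) holds, f is bounded below attaining its infimum f_* at some x_* ∈ X, and f is c-concave. Let x_0 ∈ X and define iterates by y_{n+1} = argmin_{y∈Y} c(x_n,y)+f^c(y) and x_{n+1} = argmin_{x∈X} c(x,y_{n+1})+f^c(y_{n+1}). Then f(x_{n+1}) ≤ f(x_n) − [c(x_n,y_{n+1}) − c(x_{n+1},y_{n+1})] ≤ f(x_n) for all n, and consequently min_{0≤k≤n−1} [c(x_k,y_{k+1}) − c(x_{k+1},y_{k+1})] ≤ (f(x_0) − f_*)/n for all n ≥ 1. -/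
open Set

/-- **Descent and stopping criterion for gradient descent with a general cost.**
Suppose `f` and `c` are differentiable, (A4) holds, `f` is bounded below,
attaining its infimum `f⋆ = f x⋆` at `x⋆ ∈ X`, and `f` is `c`-concave. Then the
iterates `y (n+1) = argmin_{y∈Y} c (x n) y + fc y`,
`x (n+1) = argmin_{x∈X} c x (y (n+1)) + fc (y (n+1))` satisfy the descent
property `f (x (n+1)) ≤ f (x n) - [c (x n) (y (n+1)) - c (x (n+1)) (y (n+1))] ≤ f (x n)`
and the stopping criterion
`min_{0 ≤ k ≤ n-1} [c (x k) (y (k+1)) - c (x (k+1)) (y (k+1))] ≤ (f (x 0) - f⋆)/n`. -/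
theorem gd_general_cost_descent_and_stopping {d : ℕ}
    (X Y : Set (Euc d)) (hX : IsOpen X) (hY : IsOpen Y)
    (hXne : X.Nonempty) (hYne : Y.Nonempty)
    (c : Euc d → Euc d → ℝ) (f : Euc d → ℝ)
    (hc : Differentiable ℝ (Function.uncurry c))
    (hf : Differentiable ℝ f)
    (fc : Euc d → ℝ)
    (hfc : ∀ y ∈ Y, IsLUB ((fun x => f x - c x y) '' X) (fc y))
    (hconc : ∀ x ∈ X, IsGLB ((fun y => c x y + fc y) '' Y) (f x))
    (hA4a : ∀ y ∈ Y, ∃! x, x ∈ X ∧ ∀ x' ∈ X, c x y ≤ c x' y)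
    (hA4b : ∀ x ∈ X, ∃! y, y ∈ Y ∧ ∀ y' ∈ Y, c x y + fc y ≤ c x y' + fc y')
    (xstar : Euc d) (hxstar : xstar ∈ X)
    (hmin : ∀ z ∈ X, f xstar ≤ f z)
    (x : ℕ → Euc d) (y : ℕ → Euc d)
    (hx0 : x 0 ∈ X)
    (hy : ∀ n, y (n + 1) ∈ Y ∧
      ∀ y' ∈ Y, c (x n) (y (n + 1)) + fc (y (n + 1)) ≤ c (x n) y' + fc y')
    (hxn : ∀ n, x (n + 1) ∈ X ∧
      ∀ x' ∈ X, c (x (n + 1)) (y (n + 1)) + fc (y (n + 1)) ≤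
        c x' (y (n + 1)) + fc (y (n + 1))) :
    (∀ n, f (x (n + 1)) ≤
        f (x n) - (c (x n) (y (n + 1)) - c (x (n + 1)) (y (n + 1))) ∧
      f (x n) - (c (x n) (y (n + 1)) - c (x (n + 1)) (y (n + 1))) ≤ f (x n)) ∧
    (∀ n : ℕ, 1 ≤ n → ∃ k < n,
      c (x k) (y (k + 1)) - c (x (k + 1)) (y (k + 1)) ≤
        (f (x 0) - f xstar) / (n : ℝ)) := by

  have xmem : ∀ n, x n ∈ X := by
    intro n; induction n with
    | zero => exact hx0
    | succ k ih => exact (hxn k).1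
  -- key: f (x n) = c (x n) (y (n+1)) + fc (y (n+1))
  have key : ∀ n, f (x n) = c (x n) (y (n + 1)) + fc (y (n + 1)) := by
    intro n
    have h1 : f (x n) ≤ c (x n) (y (n + 1)) + fc (y (n + 1)) :=
      (hconc (x n) (xmem n)).1 ⟨y (n + 1), (hy n).1, rfl⟩
    have h2 : c (x n) (y (n + 1)) + fc (y (n + 1)) ≤ f (x n) := by
      apply (hconc (x n) (xmem n)).2
      rintro _ ⟨y', hy', rfl⟩
      exact (hy n).2 y' hy'
    linarith
  have descent : ∀ n, f (x (n + 1)) ≤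
      f (x n) - (c (x n) (y (n + 1)) - c (x (n + 1)) (y (n + 1))) ∧
      f (x n) - (c (x n) (y (n + 1)) - c (x (n + 1)) (y (n + 1))) ≤ f (x n) := by
    intro n
    have h1 : f (x (n + 1)) - c (x (n + 1)) (y (n + 1)) ≤ fc (y (n + 1)) :=
      (hfc (y (n + 1)) (hy n).1).1 ⟨x (n + 1), xmem (n + 1), rfl⟩
    have h2 : c (x (n + 1)) (y (n + 1)) ≤ c (x n) (y (n + 1)) := by
      have := (hxn n).2 (x n) (xmem n)
      linarith
    constructor
    · have := key n; linarith
    · linarith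
  refine ⟨descent, ?_⟩
  intro n hn
  by_contra hcon
  push_neg at hcon
  have hnpos : (0 : ℝ) < (n : ℝ) := by exact_mod_cast hn
  set B := (f (x 0) - f xstar) / (n : ℝ) with hB
  have hsum1 : ∀ k ∈ Finset.range n, B < f (x k) - f (x (k + 1)) := by
    intro k hk
    have hk' := Finset.mem_range.mp hk
    have := (descent k).1
    have := hcon k hk'
    linarith
  have hsum : (n : ℝ) * B < ∑ k ∈ Finset.range n, (f (x k) - f (x (k + 1))) := by
    calc (n : ℝ) * B = ∑ _k ∈ Finset.range n, B := by
          rw [Finset.sum_const, Finset.card_range, nsmul_eq_mul]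
      _ < _ := Finset.sum_lt_sum_of_nonempty
          (Finset.nonempty_range_iff.mpr (by omega)) hsum1
  rw [Finset.sum_range_sub' (fun k => f (x k))] at hsum
  have hnb : (n : ℝ) * B = f (x 0) - f xstar := by
    rw [hB]; field_simp
  have := hmin (x n) (xmem n)
  linarith
end

section
/- Sublinear convergence rate for gradient descent with a general cost: suppose f and c are differentiable, assumption (A4) holds, f is bounded below attaining its infimum at a point of X, and f is c-concave and c-cross-convex. Let y_0 ∈ Y, set x_0 = argmin_{x∈X} c(x,y_0), and define iterates by y_{n+1} = argmin_{y∈Y} c(x_n,y)+f^c(y) and x_{n+1} = argmin_{x∈X} c(x,y_{n+1})+f^c(y_{n+1}). Then for every x ∈ X and every n ≥ 1, f(x_n) ≤ f(x) + (c(x,y_0) − c(x_0,y_0))/n. -/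
open Set

/-- **Sublinear convergence rate for gradient descent with a general cost.**
Suppose `f` and `c` are differentiable, (A4) holds, `f` is bounded below attaining
its infimum on `X`, and `f` is `c`-concave and `c`-cross-convex. Starting from
`y 0 ∈ Y` with `x 0 = argmin_{x∈X} c x (y 0)`, and iterating
`y (n+1) = argmin_{y∈Y} c (x n) y + fc y`, `x (n+1) = argmin_{x∈X} c x (y (n+1)) + fc (y (n+1))`,
for every `z ∈ X` and every `n ≥ 1`:
`f (x n) ≤ f z + (c z (y 0) - c (x 0) (y 0)) / n`. -/
theorem gd_general_cost_sublinear_rate {d : ℕ}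
    (X Y : Set (Euc d)) (hX : IsOpen X) (hY : IsOpen Y)
    (hXne : X.Nonempty) (hYne : Y.Nonempty)
    (c : Euc d → Euc d → ℝ) (f : Euc d → ℝ)
    (hc : Differentiable ℝ (Function.uncurry c))
    (hf : Differentiable ℝ f)
    (fc : Euc d → ℝ)
    (hfc : ∀ y ∈ Y, IsLUB ((fun x => f x - c x y) '' X) (fc y))
    (hconc : ∀ x ∈ X, IsGLB ((fun y => c x y + fc y) '' Y) (f x))
    (hA4a : ∀ y ∈ Y, ∃! x, x ∈ X ∧ ∀ x' ∈ X, c x y ≤ c x' y)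
    (hA4b : ∀ x ∈ X, ∃! y, y ∈ Y ∧ ∀ y' ∈ Y, c x y + fc y ≤ c x y' + fc y')
    (xstar : Euc d) (hxstar : xstar ∈ X)
    (hmin : ∀ z ∈ X, f xstar ≤ f z)
    -- f is c-cross-convex
    (hcc : ∀ x ∈ X, ∀ xb ∈ X, ∀ yb ∈ Y, ∀ yh ∈ Y,
      gradX c xb yb = 0 → gradX c xb yh = gradient f xb →
      f xb + crossDiff c x yb xb yh ≤ f x)
    (x : ℕ → Euc d) (y : ℕ → Euc d)
    (hy0 : y 0 ∈ Y)
    (hx0 : x 0 ∈ X ∧ ∀ x' ∈ X, c (x 0) (y 0) ≤ c x' (y 0))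
    (hy : ∀ n, y (n + 1) ∈ Y ∧
      ∀ y' ∈ Y, c (x n) (y (n + 1)) + fc (y (n + 1)) ≤ c (x n) y' + fc y')
    (hxn : ∀ n, x (n + 1) ∈ X ∧
      ∀ x' ∈ X, c (x (n + 1)) (y (n + 1)) + fc (y (n + 1)) ≤
        c x' (y (n + 1)) + fc (y (n + 1))) :
    ∀ z ∈ X, ∀ n : ℕ, 1 ≤ n →
      f (x n) ≤ f z + (c z (y 0) - c (x 0) (y 0)) / (n : ℝ) := by
  -- Differentiability of the partial maps `x ↦ c x y`
  have hdc : ∀ yv : Euc d, Differentiable ℝ (fun x' => c x' yv) := by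
    intro yv
    have : (fun x' => c x' yv) = (Function.uncurry c) ∘ (fun x' => (x', yv)) := rfl
    rw [this]
    exact hc.comp (differentiable_id.prodMk (differentiable_const yv))
  -- membership of iterates
  have hxmem : ∀ n, x n ∈ X := by rintro (_ | n); exacts [hx0.1, (hxn n).1]
  have hymem : ∀ n, y n ∈ Y := by rintro (_ | n); exacts [hy0, (hy n).1]
  -- x n minimizes c(·, y n) over X
  have hxminc : ∀ n, ∀ x' ∈ X, c (x n) (y n) ≤ c x' (y n) := by
    rintro (_ | n) x' hx'
    · exact hx0.2 x' hx'
    · have := (hxn n).2 x' hx'; linarith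
  -- f is a lower bound: f x' ≤ c x' y' + fc y' for x' ∈ X, y' ∈ Y
  have hflb : ∀ x' ∈ X, ∀ y' ∈ Y, f x' ≤ c x' y' + fc y' := by
    intro x' hx' y' hy'
    exact (hconc x' hx').1 ⟨y', hy', rfl⟩
  -- f (x n) = c (x n) (y (n+1)) + fc (y (n+1))
  have hfeq : ∀ n, f (x n) = c (x n) (y (n + 1)) + fc (y (n + 1)) := by
    intro n
    refine le_antisymm (hflb _ (hxmem n) _ (hymem (n + 1))) ?_
    refine (hconc _ (hxmem n)).2 ?_
    rintro b ⟨y', hy', rfl⟩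
    exact (hy n).2 y' hy'
  -- gradient condition 1: ∇ₓ c (x n) (y n) = 0
  have hgrad0 : ∀ n, gradX c (x n) (y n) = 0 := by
    intro n
    have hloc : IsLocalMin (fun x' => c x' (y n)) (x n) :=
      Filter.eventually_of_mem (hX.mem_nhds (hxmem n)) fun x' hx' => hxminc n x' hx'
    have := hloc.fderiv_eq_zero
    rw [gradX, gradient, this, map_zero]
  -- gradient condition 2: ∇ₓ c (x n) (y (n+1)) = ∇ f (x n)
  have hgradf : ∀ n, gradX c (x n) (y (n + 1)) = gradient f (x n) := by
    intro n
    have hloc : IsLocalMin (fun x' => c x' (y (n + 1)) - f x') (x n) := by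
      refine Filter.eventually_of_mem (hX.mem_nhds (hxmem n)) fun x' hx' => ?_
      have h1 := hflb x' hx' _ (hymem (n + 1))
      have h2 := hfeq n
      simp only
      linarith
    have hz := hloc.fderiv_eq_zero
    have hdiff1 : DifferentiableAt ℝ (fun x' => c x' (y (n + 1))) (x n) :=
      (hdc (y (n + 1))) (x n)
    have hsub : fderiv ℝ (fun x' => c x' (y (n + 1)) - f x') (x n) =
        fderiv ℝ (fun x' => c x' (y (n + 1))) (x n) - fderiv ℝ f (x n) :=
      fderiv_sub hdiff1 (hf (x n))
    have hfd : fderiv ℝ (fun x' => c x' (y (n + 1))) (x n) = fderiv ℝ f (x n) := by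
      rw [hz] at hsub
      have := sub_eq_zero.mp hsub.symm
      exact this
    rw [gradX, gradient, gradient, hfd]
  intro z hz
  -- the telescoping quantity
  set B : ℕ → ℝ := fun n => c z (y n) - c (x n) (y n) with hB
  have hBnonneg : ∀ n, 0 ≤ B n := fun n => by
    have := hxminc n z hz; simp only [hB]; linarith
  -- one-step inequality
  have key1 : ∀ n, f (x (n + 1)) ≤ f z + B n - B (n + 1) := by
    intro n
    have h5 := hcc z hz (x n) (hxmem n) (y n) (hymem n) (y (n + 1)) (hymem (n + 1))
      (hgrad0 n) (hgradf n)
    rw [crossDiff] at h5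
    have hmono : c (x (n + 1)) (y (n + 1)) ≤ c (x n) (y (n + 1)) := by
      have := hxminc (n + 1) (x n) (hxmem n); exact this
    have h6 : f (x (n + 1)) ≤ c (x (n + 1)) (y (n + 1)) + fc (y (n + 1)) :=
      hflb _ (hxmem (n + 1)) _ (hymem (n + 1))
    have h7 := hfeq n
    simp only [hB]
    linarith
  -- monotonicity
  have keymono : ∀ n, f (x (n + 1)) ≤ f (x n) := by
    intro n
    have h6 : f (x (n + 1)) ≤ c (x (n + 1)) (y (n + 1)) + fc (y (n + 1)) :=
      hflb _ (hxmem (n + 1)) _ (hymem (n + 1))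
    have hmono := hxminc (n + 1) (x n) (hxmem n)
    have h7 := hfeq n
    linarith
  -- summed inequality by induction
  have keysum : ∀ N : ℕ, ((N : ℝ) + 1) * f (x (N + 1)) ≤
      ((N : ℝ) + 1) * f z + B 0 - B (N + 1) := by
    intro N
    induction N with
    | zero => have := key1 0; push_cast; linarith
    | succ N ih =>
      have h1 := key1 (N + 1)
      have h2 : ((N : ℝ) + 1) * f (x (N + 1 + 1)) ≤ ((N : ℝ) + 1) * f (x (N + 1)) :=
        mul_le_mul_of_nonneg_left (keymono (N + 1)) (by positivity)
      push_cast
      push_cast at ih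
      linarith
  intro n hn
  obtain ⟨N, rfl⟩ : ∃ N, n = N + 1 := ⟨n - 1, (Nat.succ_pred_eq_of_pos hn).symm⟩
  have hpos : (0 : ℝ) < (N : ℝ) + 1 := by positivity
  have hsum := keysum N
  have hB0 : B 0 = c z (y 0) - c (x 0) (y 0) := rfl
  have hBn := hBnonneg (N + 1)
  have hkey : f (x (N + 1)) - f z ≤ (c z (y 0) - c (x 0) (y 0)) / ((N : ℝ) + 1) := by
    rw [le_div_iff₀ hpos]
    nlinarith
  have : ((N + 1 : ℕ) : ℝ) = (N : ℝ) + 1 := by push_cast; ring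
  rw [this]
  linarith
end

section
/- Linear convergence rate for gradient descent with a general cost: let λ ∈ (0,1) and Λ = (1−λ)^{−1}. Suppose f and c are differentiable, assumption (A4) holds, f is bounded below attaining its infimum at a point of X, and f is c-concave and λ-strongly c-cross-convex. Let y_0 ∈ Y, set x_0 = argmin_{x∈X} c(x,y_0), and define iterates by y_{n+1} = argmin_{y∈Y} c(x_n,y)+f^c(y) and x_{n+1} = argmin_{x∈X} c(x,y_{n+1})+f^c(y_{n+1}). Then for every x ∈ X and every n ≥ 1, f(x_n) ≤ f(x) + λ·(c(x,y_0) − c(x_0,y_0))/(Λ^n − 1). -/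
open Set

/-- A local minimum of a differentiable real function has zero gradient. -/
lemma aux_gradient_eq_zero_of_isLocalMin {d : ℕ} {φ : Euc d → ℝ} {a : Euc d}
    (h : IsLocalMin φ a) : gradient φ a = 0 := by
  unfold gradient
  rw [h.fderiv_eq_zero, map_zero]

/-- **Linear convergence rate for gradient descent with a general cost.**
Let `λ ∈ (0,1)` and `Λ = (1-λ)⁻¹`. Suppose `f` and `c` are differentiable, (A4)
holds, `f` is bounded below attaining its infimum on `X`, and `f` is `c`-concave
and λ-strongly `c`-cross-convex. Starting from `y 0 ∈ Y` with
`x 0 = argmin_{x∈X} c x (y 0)` and the usual iterates, for every `z ∈ X` and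
every `n ≥ 1`: `f (x n) ≤ f z + λ (c z (y 0) - c (x 0) (y 0)) / (Λ^n - 1)`. -/
theorem gd_general_cost_linear_rate {d : ℕ}
    (X Y : Set (Euc d)) (hX : IsOpen X) (hY : IsOpen Y)
    (hXne : X.Nonempty) (hYne : Y.Nonempty)
    (lam : ℝ) (hlam0 : 0 < lam) (hlam1 : lam < 1)
    (c : Euc d → Euc d → ℝ) (f : Euc d → ℝ)
    (hc : Differentiable ℝ (Function.uncurry c))
    (hf : Differentiable ℝ f)
    (fc : Euc d → ℝ)
    (hfc : ∀ y ∈ Y, IsLUB ((fun x => f x - c x y) '' X) (fc y))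
    (hconc : ∀ x ∈ X, IsGLB ((fun y => c x y + fc y) '' Y) (f x))
    (hA4a : ∀ y ∈ Y, ∃! x, x ∈ X ∧ ∀ x' ∈ X, c x y ≤ c x' y)
    (hA4b : ∀ x ∈ X, ∃! y, y ∈ Y ∧ ∀ y' ∈ Y, c x y + fc y ≤ c x y' + fc y')
    (xstar : Euc d) (hxstar : xstar ∈ X)
    (hmin : ∀ z ∈ X, f xstar ≤ f z)
    -- f is λ-strongly c-cross-convex
    (hcc : ∀ x ∈ X, ∀ xb ∈ X, ∀ yb ∈ Y, ∀ yh ∈ Y,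
      gradX c xb yb = 0 → gradX c xb yh = gradient f xb →
      f xb + crossDiff c x yb xb yh + lam * (c x yb - c xb yb) ≤ f x)
    (x : ℕ → Euc d) (y : ℕ → Euc d)
    (hy0 : y 0 ∈ Y)
    (hx0 : x 0 ∈ X ∧ ∀ x' ∈ X, c (x 0) (y 0) ≤ c x' (y 0))
    (hy : ∀ n, y (n + 1) ∈ Y ∧
      ∀ y' ∈ Y, c (x n) (y (n + 1)) + fc (y (n + 1)) ≤ c (x n) y' + fc y')
    (hxn : ∀ n, x (n + 1) ∈ X ∧
      ∀ x' ∈ X, c (x (n + 1)) (y (n + 1)) + fc (y (n + 1)) ≤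
        c x' (y (n + 1)) + fc (y (n + 1))) :
    ∀ z ∈ X, ∀ n : ℕ, 1 ≤ n →
      f (x n) ≤ f z +
        lam * (c z (y 0) - c (x 0) (y 0)) / ((1 - lam)⁻¹ ^ n - 1) := by
  intro z hz n hn
  set θ : ℝ := 1 - lam with hθ
  have hθ0 : 0 < θ := by simp only [hθ]; linarith
  have hθ1 : θ < 1 := by simp only [hθ]; linarith
  -- differentiability in the first variable
  have hcx : ∀ y₀ : Euc d, Differentiable ℝ (fun x' => c x' y₀) := fun y₀ =>
    hc.comp (differentiable_id.prodMk (differentiable_const y₀))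
  -- memberships
  have hxmem : ∀ k, x k ∈ X := by
    intro k; cases k with
    | zero => exact hx0.1
    | succ m => exact (hxn m).1
  have hymem : ∀ k, y k ∈ Y := by
    intro k; cases k with
    | zero => exact hy0
    | succ m => exact (hy m).1
  -- x k minimizes c(·, y k) over X
  have hxminc : ∀ k, ∀ x' ∈ X, c (x k) (y k) ≤ c x' (y k) := by
    intro k; cases k with
    | zero => exact hx0.2
    | succ m =>
        intro x' hx'
        have := (hxn m).2 x' hx'
        linarith
  -- f is bounded above by c(·,y') + fc y'
  have hflb : ∀ w ∈ X, ∀ y' ∈ Y, f w ≤ c w y' + fc y' := by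
    intro w hw y' hy'
    exact (hconc w hw).1 ⟨y', hy', rfl⟩
  -- equality: f(x k) = c(x k, y (k+1)) + fc(y (k+1))
  have heq : ∀ k, f (x k) = c (x k) (y (k + 1)) + fc (y (k + 1)) := by
    intro k
    have h1 : f (x k) ≤ c (x k) (y (k + 1)) + fc (y (k + 1)) :=
      hflb (x k) (hxmem k) (y (k + 1)) (hymem (k + 1))
    have h2 : c (x k) (y (k + 1)) + fc (y (k + 1)) ≤ f (x k) := by
      refine (hconc (x k) (hxmem k)).2 ?_
      rintro b ⟨y', hy', rfl⟩
      exact (hy k).2 y' hy'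
    linarith
  -- gradient condition 1: ∇ₓ c (x k) (y k) = 0
  have hg1 : ∀ k, gradX c (x k) (y k) = 0 := by
    intro k
    refine aux_gradient_eq_zero_of_isLocalMin ?_
    exact Filter.eventually_of_mem (hX.mem_nhds (hxmem k))
      (fun x' hx' => hxminc k x' hx')
  -- gradient condition 2: ∇ₓ c (x k) (y (k+1)) = ∇ f (x k)
  have hg2 : ∀ k, gradX c (x k) (y (k + 1)) = gradient f (x k) := by
    intro k
    have hloc : IsLocalMin (fun x' => c x' (y (k + 1)) + fc (y (k + 1)) - f x') (x k) := by
      refine Filter.eventually_of_mem (hX.mem_nhds (hxmem k)) (fun x' hx' => ?_)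
      have h1 := hflb x' hx' (y (k + 1)) (hymem (k + 1))
      have h2 := heq k
      simp only
      linarith
    have hder : HasFDerivAt (fun x' => c x' (y (k + 1)) + fc (y (k + 1)) - f x')
        (fderiv ℝ (fun x' => c x' (y (k + 1))) (x k) - fderiv ℝ f (x k)) (x k) := by
      exact ((((hcx (y (k + 1))) (x k)).hasFDerivAt.add_const _).sub (hf (x k)).hasFDerivAt)
    have hz0 : fderiv ℝ (fun x' => c x' (y (k + 1))) (x k) - fderiv ℝ f (x k) = 0 := by
      rw [← hder.fderiv]
      exact hloc.fderiv_eq_zero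
    have hfd : fderiv ℝ (fun x' => c x' (y (k + 1))) (x k) = fderiv ℝ f (x k) :=
      sub_eq_zero.mp hz0
    unfold gradX gradient
    rw [hfd]
  -- the key one-step inequality
  have key : ∀ k, f (x (k + 1)) - f z + (c z (y (k + 1)) - c (x (k + 1)) (y (k + 1)))
      + lam * (c z (y k) - c (x k) (y k)) ≤ c z (y k) - c (x k) (y k) := by
    intro k
    have h1 := hcc z hz (x k) (hxmem k) (y k) (hymem k) (y (k + 1)) (hymem (k + 1))
      (hg1 k) (hg2 k)
    unfold crossDiff at h1
    have h2 := heq k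
    have h3 := hflb (x (k + 1)) (hxmem (k + 1)) (y (k + 1)) (hymem (k + 1))
    linarith
  -- monotonicity of f along the iterates
  have hstep : ∀ k, f (x (k + 1)) ≤ f (x k) := by
    intro k
    have h1 := hflb (x (k + 1)) (hxmem (k + 1)) (y (k + 1)) (hymem (k + 1))
    have h2 := hxminc (k + 1) (x k) (hxmem k)
    have h3 := heq k
    linarith
  have hmono : ∀ j k : ℕ, j ≤ k → f (x k) ≤ f (x j) := by
    intro j k hjk
    exact antitone_nat_of_succ_le (f := fun k => f (x k)) hstep hjk
  set V : ℕ → ℝ := fun k => c z (y k) - c (x k) (y k) with hV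
  set e : ℝ := f (x n) - f z with he
  -- the main iteration bound
  have hiter : ∀ k, k ≤ n → V k + e * ∑ i ∈ Finset.range k, θ ^ i ≤ θ ^ k * V 0 := by
    intro k
    induction k with
    | zero => intro _; simp
    | succ k ih =>
        intro hk
        have ihk := ih (Nat.le_of_succ_le hk)
        have hek : e ≤ f (x (k + 1)) - f z := by
          have := hmono (k + 1) n hk
          simp only [he]; linarith
        have hkey := key k
        have hθV : θ * V k = V k - lam * V k := by rw [hθ]; ring
        have hstep1 : V (k + 1) + e ≤ θ * V k := by
          simp only [hV] at hθV ⊢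
          linarith
        have hmul : θ * (V k + e * ∑ i ∈ Finset.range k, θ ^ i) ≤ θ * (θ ^ k * V 0) :=
          mul_le_mul_of_nonneg_left ihk hθ0.le
        have expand : θ * (V k + e * ∑ i ∈ Finset.range k, θ ^ i)
            = θ * V k + e * (θ * ∑ i ∈ Finset.range k, θ ^ i) := by ring
        have expand2 : θ * (θ ^ k * V 0) = θ ^ (k + 1) * V 0 := by ring
        rw [geom_sum_succ]
        have gexpand : e * (θ * ∑ i ∈ Finset.range k, θ ^ i + 1)
            = e * (θ * ∑ i ∈ Finset.range k, θ ^ i) + e := by ring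
        linarith
  have hVn : 0 ≤ V n := by
    have := hxminc n z hz
    simp only [hV]; linarith
  have hfin := hiter n le_rfl
  set S : ℝ := ∑ i ∈ Finset.range n, θ ^ i with hS
  have hSpos : 0 < S :=
    Finset.sum_pos (fun i _ => pow_pos hθ0 i) (Finset.nonempty_range_iff.mpr (by omega))
  have heS : e * S ≤ θ ^ n * V 0 := by linarith
  have hθn : (0 : ℝ) < θ ^ n := pow_pos hθ0 n
  have h1θn : 0 < 1 - θ ^ n := by
    have := pow_lt_one₀ hθ0.le hθ1 (by omega : n ≠ 0)
    linarith
  have hSeq : S = (1 - θ ^ n) / lam := by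
    rw [hS, geom_sum_eq (by linarith : θ ≠ 1) n]
    rw [div_eq_div_iff (by linarith) (by linarith)]
    ring
  have hΛ : (1 - lam)⁻¹ ^ n - 1 = (1 - θ ^ n) / θ ^ n := by
    rw [← hθ, inv_pow]
    field_simp
  have hrhs : lam * (c z (y 0) - c (x 0) (y 0)) / ((1 - lam)⁻¹ ^ n - 1)
      = θ ^ n * V 0 / S := by
    rw [hΛ, hSeq]
    have hV0 : V 0 = c z (y 0) - c (x 0) (y 0) := rfl
    rw [hV0]
    field_simp
  have hfinal : e ≤ θ ^ n * V 0 / S := (le_div_iff₀ hSpos).mpr heS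
  rw [hrhs]
  simp only [he] at hfinal
  linarith
end

section
/- Semi-local criterion for the five-point property: let φ(x,y) = c(x,y) + g(x) + h(y) satisfy assumption (A1), let c satisfy assumption (A2) and have nonnegative cross-curvature in the Kim–McCann sense, and suppose F(x) = inf_{y∈Y} φ(x,y) is differentiable on X. (i) If t ↦ F(x(t)) is convex along every horizontal c-segment t ↦ (x(t),y) satisfying ∇_x φ(x(0),y) = 0, then φ satisfies the five-point property (FP). (ii) For λ > 0, if t ↦ F(x(t)) − λ·φ(x(t),y) is convex along the same c-segments, then φ satisfies the λ-strong five-point property (λ-FP). -/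
open Set

/-- Gradient of the cost `c` in its second variable: `∇_y c(x, y)`. -/
noncomputable def gradY {d : ℕ} (c : Euc d → Euc d → ℝ) (x y : Euc d) : Euc d :=
  gradient (fun y' => c x y') y

/-- A horizontal `c`-segment: a curve `s ↦ (γ s, y)` lying in `X × {y}` such that
`s ↦ ∇_y c (γ s) y` is affine in `s` on `[0,1]`. -/
def IsHorizCSeg {d : ℕ} (X : Set (Euc d)) (c : Euc d → Euc d → ℝ)
    (γ : ℝ → Euc d) (y : Euc d) : Prop :=
  (∀ s ∈ Set.Icc (0 : ℝ) 1, γ s ∈ X) ∧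
  ∃ a b : Euc d, ∀ s ∈ Set.Icc (0 : ℝ) 1, gradY c (γ s) y = a + s • b

/-- A vertical `c`-segment: a curve `t ↦ (x, γ t)` lying in `{x} × Y` such that
`t ↦ ∇ₓ c x (γ t)` is affine in `t` on `[0,1]`. -/
def IsVertCSeg {d : ℕ} (Y : Set (Euc d)) (c : Euc d → Euc d → ℝ)
    (x : Euc d) (γ : ℝ → Euc d) : Prop :=
  (∀ t ∈ Set.Icc (0 : ℝ) 1, γ t ∈ Y) ∧
  ∃ a b : Euc d, ∀ t ∈ Set.Icc (0 : ℝ) 1, gradX c x (γ t) = a + t • b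

/-- Nonnegative cross-curvature in the Kim–McCann sense: along every horizontal
`c`-segment `s ↦ (γ s, y)` and for every `y' ∈ Y`, the function
`s ↦ -c (γ s) y' + c (γ s) y` is convex on `[0,1]`. -/
def NonnegCrossCurv {d : ℕ} (X Y : Set (Euc d)) (c : Euc d → Euc d → ℝ) : Prop :=
  ∀ y ∈ Y, ∀ y' ∈ Y, ∀ γ : ℝ → Euc d, IsHorizCSeg X c γ y →
    ConvexOn ℝ (Set.Icc (0 : ℝ) 1) (fun s => -c (γ s) y' + c (γ s) y)

section Aux

open Function Topology Filter Asymptotics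

variable {d : ℕ}

-- partial fderiv in second variable
lemma fderiv_snd_eq (c : Euc d → Euc d → ℝ) (hc : ContDiff ℝ 4 (uncurry c)) (x y : Euc d) :
    fderiv ℝ (fun y' => c x y') y
      = (fderiv ℝ (uncurry c) (x, y)).comp (ContinuousLinearMap.inr ℝ (Euc d) (Euc d)) := by
  have h1 : HasFDerivAt (fun y' : Euc d => (x, y')) (ContinuousLinearMap.inr ℝ (Euc d) (Euc d)) y :=
    hasFDerivAt_prodMk_right x y
  have h2 : HasFDerivAt (uncurry c) (fderiv ℝ (uncurry c) (x, y)) (x, y) :=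
    ((hc.differentiable (by norm_num)) (x, y)).hasFDerivAt
  exact (h2.comp y h1).fderiv

lemma fderiv_fst_eq (c : Euc d → Euc d → ℝ) (hc : ContDiff ℝ 4 (uncurry c)) (x y : Euc d) :
    fderiv ℝ (fun x' => c x' y) x
      = (fderiv ℝ (uncurry c) (x, y)).comp (ContinuousLinearMap.inl ℝ (Euc d) (Euc d)) := by
  have h1 : HasFDerivAt (fun x' : Euc d => (x', y)) (ContinuousLinearMap.inl ℝ (Euc d) (Euc d)) x :=
    hasFDerivAt_prodMk_left x y
  have h2 : HasFDerivAt (uncurry c) (fderiv ℝ (uncurry c) (x, y)) (x, y) :=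
    ((hc.differentiable (by norm_num)) (x, y)).hasFDerivAt
  exact (h2.comp x h1).fderiv

noncomputable def dualE (d : ℕ) : (Euc d →L[ℝ] ℝ) ≃L[ℝ] Euc d :=
  (InnerProductSpace.toDual ℝ (Euc d)).symm.toContinuousLinearEquiv

lemma gradY_eq_dual (c : Euc d → Euc d → ℝ) (hc : ContDiff ℝ 4 (uncurry c)) (x y : Euc d) :
    gradY c x y = dualE d ((fderiv ℝ (uncurry c) (x, y)).comp
      (ContinuousLinearMap.inr ℝ (Euc d) (Euc d))) := by
  rw [gradY, gradient, fderiv_snd_eq c hc x y]; rfl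

lemma contDiff_gradY (c : Euc d → Euc d → ℝ) (hc : ContDiff ℝ 4 (uncurry c)) (y : Euc d) :
    ContDiff ℝ 2 (fun z => gradY c z y) := by
  have h1 : ContDiff ℝ 3 (fderiv ℝ (uncurry c)) := hc.fderiv_right (by norm_num)
  have h2 : ContDiff ℝ 3 (fun z : Euc d => fderiv ℝ (uncurry c) (z, y)) :=
    h1.comp (contDiff_prodMk_left y)
  have h3 : ContDiff ℝ 3 (fun z : Euc d =>
      (fderiv ℝ (uncurry c) (z, y)).comp (ContinuousLinearMap.inr ℝ (Euc d) (Euc d))) :=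
    h2.clm_comp contDiff_const
  have h4 : ContDiff ℝ 3 (fun z => gradY c z y) := by
    have := (dualE d).contDiff.comp h3
    convert this using 1
    funext z; exact gradY_eq_dual c hc z y
  exact h4.of_le (by norm_num)

lemma inner_fderiv_gradY (c : Euc d → Euc d → ℝ) (hc : ContDiff ℝ 4 (uncurry c)) (x y : Euc d)
    (u v : Euc d) :
    inner ℝ (fderiv ℝ (fun z => gradY c z y) x u) v
      = fderiv ℝ (fderiv ℝ (uncurry c)) (x, y) (u, 0) (0, v) := by
  classical
  set f := uncurry c with hf
  have hD : Differentiable ℝ (fderiv ℝ f) :=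
    (hc.fderiv_right (m := 3) (by norm_num)).differentiable (by norm_num)
  set pre : (Euc d × Euc d →L[ℝ] ℝ) →L[ℝ] (Euc d →L[ℝ] ℝ) :=
    (ContinuousLinearMap.compL ℝ (Euc d) (Euc d × Euc d) ℝ).flip
      (ContinuousLinearMap.inr ℝ (Euc d) (Euc d)) with hpre
  have hA : HasFDerivAt (fun z : Euc d => fderiv ℝ f (z, y))
      ((fderiv ℝ (fderiv ℝ f) (x, y)).comp (ContinuousLinearMap.inl ℝ (Euc d) (Euc d))) x :=
    (hD (x, y)).hasFDerivAt.comp x (hasFDerivAt_prodMk_left x y)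
  have hB : HasFDerivAt (fun z : Euc d => gradY c z y)
      (((dualE d).toContinuousLinearMap.comp pre).comp
        ((fderiv ℝ (fderiv ℝ f) (x, y)).comp (ContinuousLinearMap.inl ℝ (Euc d) (Euc d)))) x := by
    have := (((dualE d).toContinuousLinearMap.comp pre).hasFDerivAt
      (x := fderiv ℝ f (x, y))).comp x hA
    refine this.congr_of_eventuallyEq (Filter.Eventually.of_forall fun z => ?_)
    show gradY c z y = _
    rw [gradY_eq_dual c hc z y]
    rfl
  rw [hB.fderiv]
  simp only [ContinuousLinearMap.coe_comp', Function.comp_apply,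
    ContinuousLinearEquiv.coe_coe, ContinuousLinearMap.coe_inl]
  rw [dualE]
  rw [LinearIsometryEquiv.coe_toContinuousLinearEquiv]
  rw [InnerProductSpace.toDual_symm_apply]
  simp [hpre]

lemma gradX_eq_dual (c : Euc d → Euc d → ℝ) (hc : ContDiff ℝ 4 (uncurry c)) (x y : Euc d) :
    gradX c x y = dualE d ((fderiv ℝ (uncurry c) (x, y)).comp
      (ContinuousLinearMap.inl ℝ (Euc d) (Euc d))) := by
  rw [gradX, gradient, fderiv_fst_eq c hc x y]; rfl

lemma inner_fderiv_gradX (c : Euc d → Euc d → ℝ) (hc : ContDiff ℝ 4 (uncurry c)) (x y : Euc d)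
    (u v : Euc d) :
    inner ℝ (fderiv ℝ (fun y' => gradX c x y') y v) u
      = fderiv ℝ (fderiv ℝ (uncurry c)) (x, y) (0, v) (u, 0) := by
  classical
  set f := uncurry c with hf
  have hD : Differentiable ℝ (fderiv ℝ f) :=
    (hc.fderiv_right (m := 3) (by norm_num)).differentiable (by norm_num)
  set pre : (Euc d × Euc d →L[ℝ] ℝ) →L[ℝ] (Euc d →L[ℝ] ℝ) :=
    (ContinuousLinearMap.compL ℝ (Euc d) (Euc d × Euc d) ℝ).flip
      (ContinuousLinearMap.inl ℝ (Euc d) (Euc d)) with hpre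
  have hA : HasFDerivAt (fun y' : Euc d => fderiv ℝ f (x, y'))
      ((fderiv ℝ (fderiv ℝ f) (x, y)).comp (ContinuousLinearMap.inr ℝ (Euc d) (Euc d))) y :=
    (hD (x, y)).hasFDerivAt.comp y (hasFDerivAt_prodMk_right x y)
  have hB : HasFDerivAt (fun y' : Euc d => gradX c x y')
      (((dualE d).toContinuousLinearMap.comp pre).comp
        ((fderiv ℝ (fderiv ℝ f) (x, y)).comp (ContinuousLinearMap.inr ℝ (Euc d) (Euc d)))) y := by
    have := (((dualE d).toContinuousLinearMap.comp pre).hasFDerivAt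
      (x := fderiv ℝ f (x, y))).comp y hA
    refine this.congr_of_eventuallyEq (Filter.Eventually.of_forall fun y' => ?_)
    show gradX c x y' = _
    rw [gradX_eq_dual c hc x y']
    rfl
  rw [hB.fderiv]
  simp only [ContinuousLinearMap.coe_comp', Function.comp_apply,
    ContinuousLinearEquiv.coe_coe, ContinuousLinearMap.coe_inr]
  rw [dualE]
  rw [LinearIsometryEquiv.coe_toContinuousLinearEquiv]
  rw [InnerProductSpace.toDual_symm_apply]
  simp [hpre]

lemma bij_fderiv_gradY (c : Euc d → Euc d → ℝ) (hc : ContDiff ℝ 4 (uncurry c)) (x y : Euc d)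
    (hbij : Function.Bijective (fderiv ℝ (fun y' => gradX c x y') y)) :
    Function.Bijective (fderiv ℝ (fun z => gradY c z y) x) := by
  have hsym : IsSymmSndFDerivAt ℝ (uncurry c) (x, y) :=
    hc.contDiffAt.isSymmSndFDerivAt (by norm_num)
  have key : ∀ u v : Euc d,
      (inner ℝ (fderiv ℝ (fun z => gradY c z y) x u) v : ℝ)
        = inner ℝ (fderiv ℝ (fun y' => gradX c x y') y v) u := by
    intro u v
    rw [inner_fderiv_gradY c hc x y u v, inner_fderiv_gradX c hc x y u v]
    exact hsym (u, 0) (0, v)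
  have hinj : Function.Injective (fderiv ℝ (fun z => gradY c z y) x) := by
    intro u u' huv
    have h0 : ∀ v : Euc d,
        (inner ℝ (fderiv ℝ (fun z => gradY c z y) x (u - u')) v : ℝ) = 0 := by
      intro v
      rw [map_sub, inner_sub_left, huv]
      ring
    have : ∀ w : Euc d, (inner ℝ w (u - u') : ℝ) = 0 := by
      intro w
      obtain ⟨v, hv⟩ := hbij.2 w
      have := key (u - u') v
      rw [h0 v, hv] at this
      exact this.symm
    have := this (u - u')
    rw [inner_self_eq_zero] at this
    exact sub_eq_zero.mp this
  constructor
  · exact hinj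
  · exact LinearMap.injective_iff_surjective.mp hinj

lemma local_branch (c : Euc d → Euc d → ℝ) (hc : ContDiff ℝ 4 (uncurry c)) (x y b : Euc d)
    (hbij : Function.Bijective (fderiv ℝ (fun y' => gradX c x y') y)) :
    ∃ γ : ℝ → Euc d, γ 0 = x ∧
      (∀ᶠ t in 𝓝 (0 : ℝ), gradY c (γ t) y = gradY c x y + t • b) ∧
      ContinuousAt γ 0 ∧
      (fun t => γ t - x) =O[𝓝 (0 : ℝ)] (fun t => t) := by
  classical
  set Φ : Euc d → Euc d := fun z => gradY c z y with hΦdef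
  have hbijΘ : Function.Bijective (fderiv ℝ Φ x) := bij_fderiv_gradY c hc x y hbij
  set e : Euc d ≃L[ℝ] Euc d :=
    LinearEquiv.toContinuousLinearEquiv
      (LinearEquiv.ofBijective ((fderiv ℝ Φ x) : Euc d →ₗ[ℝ] Euc d) hbijΘ) with he
  have hecoe : (e : Euc d →L[ℝ] Euc d) = fderiv ℝ Φ x := by
    ext v
    rfl
  have hstrict : HasStrictFDerivAt Φ (e : Euc d →L[ℝ] Euc d) x := by
    rw [hecoe]
    exact ((contDiff_gradY c hc y).contDiffAt).hasStrictFDerivAt (by norm_num)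
  set g := hstrict.localInverse Φ e x with hg
  set γ : ℝ → Euc d := fun t => g (Φ x + t • b) with hγ
  have hγ0 : γ 0 = x := by
    simp only [hγ, zero_smul, add_zero]
    exact hstrict.localInverse_apply_image
  have hτ : Filter.Tendsto (fun t : ℝ => Φ x + t • b) (𝓝 0) (𝓝 (Φ x)) := by
    have : Continuous (fun t : ℝ => Φ x + t • b) := by continuity
    have h0 := this.tendsto 0
    simpa using h0
  have hright : ∀ᶠ t in 𝓝 (0 : ℝ), Φ (γ t) = Φ x + t • b := by
    have := hstrict.eventually_right_inverse
    exact hτ.eventually this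
  have hdiff : DifferentiableAt ℝ γ 0 := by
    have hg' : DifferentiableAt ℝ g (Φ x) :=
      hstrict.to_localInverse.differentiableAt
    have hτ' : DifferentiableAt ℝ (fun t : ℝ => Φ x + t • b) 0 := by
      apply DifferentiableAt.const_add
      exact (differentiableAt_id.smul_const b)
    have h0 : Φ x + (0:ℝ) • b = Φ x := by simp
    rw [← h0] at hg'
    exact hg'.comp 0 hτ'
  have hcont : ContinuousAt γ 0 := hdiff.continuousAt
  have hbigO : (fun t => γ t - x) =O[𝓝 (0 : ℝ)] (fun t => t) := by
    have := hdiff.isBigO_sub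
    simpa [hγ0] using this
  exact ⟨γ, hγ0, hright, hcont, hbigO⟩


lemma key_lemma {d : ℕ}
    (X Y : Set (Euc d)) (hX : IsOpen X)
    (c : Euc d → Euc d → ℝ) (g h : Euc d → ℝ)
    (φ : Euc d → Euc d → ℝ)
    (hφ : φ = fun x y => c x y + g x + h y)
    (hc4 : ContDiff ℝ 4 (Function.uncurry c))
    (hg : Differentiable ℝ g)
    (hA2a : ∀ x ∈ X, ∀ y ∈ Y,
      Function.Bijective (fderiv ℝ (fun y' => gradX c x y') y))
    (hA2bH : ∀ x ∈ X, ∀ x' ∈ X, ∀ y ∈ Y,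
      ∃ γ : ℝ → Euc d, IsHorizCSeg X c γ y ∧ γ 0 = x ∧ γ 1 = x')
    (hcc : NonnegCrossCurv X Y c)
    (T S : Euc d → Euc d)
    (hT : ∀ x ∈ X, T x ∈ Y ∧ (∀ y' ∈ Y, φ x (T x) ≤ φ x y') ∧
      ∀ y ∈ Y, (∀ y' ∈ Y, φ x y ≤ φ x y') → y = T x)
    (hS : ∀ y ∈ Y, S y ∈ X ∧ (∀ x' ∈ X, φ (S y) y ≤ φ x' y) ∧
      ∀ x ∈ X, (∀ x' ∈ X, φ x y ≤ φ x' y) → x = S y)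
    (F : Euc d → ℝ)
    (hF : ∀ x ∈ X, IsGLB ((fun y => φ x y) '' Y) (F x))
    (hFdiff : ∀ x ∈ X, DifferentiableAt ℝ F x)
    (lam : ℝ)
    (hyp : ∀ y ∈ Y, ∀ γ : ℝ → Euc d, IsHorizCSeg X c γ y →
        gradient (fun x' => φ x' y) (γ 0) = 0 →
        ConvexOn ℝ (Set.Icc (0 : ℝ) 1) (fun t => F (γ t) - lam * φ (γ t) y)) :
    ∀ x ∈ X, ∀ y ∈ Y, ∀ y0 ∈ Y,
      φ x (T (S y0)) + (1 - lam) * φ (S y0) y0 ≤ φ x y + (1 - lam) * φ x y0 := by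
  intro x hx y hy y0 hy0
  obtain ⟨hx0X, hx0min, -⟩ := hS y0 hy0
  set x0 := S y0 with hx0def
  obtain ⟨hy1Y, hy1min, -⟩ := hT x0 hx0X
  set y1 := T x0 with hy1def
  have hφ' : ∀ z w, φ z w = c z w + g z + h w := fun z w => by rw [hφ]
  -- differentiability of partial maps
  have hcdiff : Differentiable ℝ (Function.uncurry c) := hc4.differentiable (by norm_num)
  have hpart : ∀ y' : Euc d, Differentiable ℝ (fun z => c z y') := by
    intro y'
    exact hcdiff.comp (differentiable_id.prodMk (differentiable_const y'))
  have hφdiff : ∀ y' : Euc d, Differentiable ℝ (fun z => φ z y') := by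
    intro y'
    rw [hφ]
    exact ((hpart y').add hg).add_const (h y')
  -- F x0 = φ x0 y1
  have hFx0 : F x0 = φ x0 y1 := by
    refine le_antisymm ((hF x0 hx0X).1 ⟨y1, hy1Y, rfl⟩) ((hF x0 hx0X).2 ?_)
    rintro r ⟨y', hy', rfl⟩
    exact hy1min y' hy'
  have hFxy : F x ≤ φ x y := (hF x hx).1 ⟨y, hy, rfl⟩
  -- envelope theorem
  set L := fderiv ℝ F x0 with hL
  have henv : fderiv ℝ (fun z => φ z y1) x0 = L := by
    have hmax : IsLocalMax (fun z => F z - φ z y1) x0 := by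
      filter_upwards [hX.mem_nhds hx0X] with z hz
      have h1 : F z ≤ φ z y1 := (hF z hz).1 ⟨y1, hy1Y, rfl⟩
      have h2 : F x0 - φ x0 y1 = 0 := by rw [hFx0]; ring
      simp only [h2]
      linarith
    have hd : HasFDerivAt (fun z => F z - φ z y1)
        (L - fderiv ℝ (fun z => φ z y1) x0) x0 :=
      ((hFdiff x0 hx0X).hasFDerivAt).sub ((hφdiff y1 x0).hasFDerivAt)
    have := hmax.hasFDerivAt_eq_zero hd
    have := sub_eq_zero.mp this
    exact this.symm
  -- first-order condition at x0 for φ(·, y0)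
  have hf0 : fderiv ℝ (fun z => φ z y0) x0 = 0 := by
    have hmin : IsLocalMin (fun z => φ z y0) x0 := by
      filter_upwards [hX.mem_nhds hx0X] with z hz
      exact hx0min z hz
    exact hmin.fderiv_eq_zero
  have hgrad0 : gradient (fun x' => φ x' y0) x0 = 0 := by
    rw [gradient, hf0, map_zero]
  -- the given segment from x0 to x
  obtain ⟨γ, hγseg, hγ0, hγ1⟩ := hA2bH x0 hx0X x hx y0 hy0
  obtain ⟨hγX, a, b, hab⟩ := hγseg
  have ha : a = gradY c x0 y0 := by
    have := hab 0 ⟨le_refl _, zero_le_one⟩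
    rw [hγ0] at this
    simpa using this.symm
  -- the nice local branch
  obtain ⟨γt, hγt0, hγtright, hγtcont, hγtO⟩ :=
    local_branch c hc4 x0 y0 b (hA2a x0 hx0X y0 hy0)
  obtain ⟨C, hCpos, hCbound⟩ := hγtO.exists_pos
  have hCb : ∀ᶠ t in 𝓝 (0:ℝ), ‖γt t - x0‖ ≤ C * ‖t‖ := hCbound.bound
  have hγtX : ∀ᶠ t in 𝓝 (0:ℝ), γt t ∈ X := by
    have : γt 0 ∈ X := by rw [hγt0]; exact hx0X
    exact hγtcont.eventually_mem (hX.mem_nhds this)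
  -- choose δ
  obtain ⟨ε₁, hε₁pos, hε₁⟩ := Metric.eventually_nhds_iff.mp (hγtright.and (hγtX.and hCb))
  set δ : ℝ := min (ε₁ / 2) (1 / 2) with hδdef
  have hδpos : 0 < δ := by positivity
  have hδle : δ ≤ 1 / 2 := min_le_right _ _
  have hδsmall : ∀ t : ℝ, |t| ≤ δ → (gradY c (γt t) y0 = gradY c x0 y0 + t • b ∧
      (γt t ∈ X ∧ ‖γt t - x0‖ ≤ C * ‖t‖)) := by
    intro t ht
    apply hε₁
    rw [Real.dist_eq, sub_zero]
    calc |t| ≤ δ := ht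
    _ ≤ ε₁ / 2 := min_le_left _ _
    _ < ε₁ := by linarith
  -- the glued segment
  set γ'' : ℝ → Euc d := fun t => if t ≤ δ then γt t else γ t with hγ''def
  have hγ''seg : IsHorizCSeg X c γ'' y0 := by
    constructor
    · intro s hs
      by_cases hsδ : s ≤ δ
      · have : |s| ≤ δ := by rw [abs_of_nonneg hs.1]; exact hsδ
        simp only [hγ''def, if_pos hsδ]
        exact (hδsmall s this).2.1
      · simp only [hγ''def, if_neg hsδ]
        exact hγX s hs
    · refine ⟨a, b, fun s hs => ?_⟩
      by_cases hsδ : s ≤ δ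
      · have : |s| ≤ δ := by rw [abs_of_nonneg hs.1]; exact hsδ
        simp only [hγ''def, if_pos hsδ]
        rw [(hδsmall s this).1, ha]
      · simp only [hγ''def, if_neg hsδ]
        exact hab s hs
  have hγ''0 : γ'' 0 = x0 := by
    simp only [hγ''def, if_pos hδpos.le]
    exact hγt0
  have hγ''1 : γ'' 1 = x := by
    have : ¬ ((1:ℝ) ≤ δ) := by
      intro hcontra
      linarith
    simp only [hγ''def, if_neg this]
    exact hγ1
  -- convexity facts
  have hconv : ConvexOn ℝ (Set.Icc (0:ℝ) 1) (fun t => F (γ'' t) - lam * φ (γ'' t) y0) := by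
    apply hyp y0 hy0 γ'' hγ''seg
    rw [hγ''0]
    exact hgrad0
  have hψ : ConvexOn ℝ (Set.Icc (0:ℝ) 1) (fun s => -c (γ'' s) y1 + c (γ'' s) y0) :=
    hcc y0 hy0 y1 hy1Y γ'' hγ''seg
  set H : ℝ → ℝ := fun t => (F (γ'' t) - lam * φ (γ'' t) y0) +
    (-c (γ'' t) y1 + c (γ'' t) y0) with hHdef
  have hHconv : ConvexOn ℝ (Set.Icc (0:ℝ) 1) H := hconv.add hψ
  -- main estimate
  have hH01 : H 0 ≤ H 1 := by
    refine le_of_forall_pos_le_add (fun ε hε => ?_)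
    set K : ℝ := 2 + |1 - lam| with hKdef
    have hKpos : 0 < K := by positivity
    set ε' : ℝ := ε / ((3 + |1 - lam|) * (C + 1)) with hε'def
    have hε'pos : 0 < ε' := by positivity
    -- remainder estimates
    have hrF : ∀ᶠ z in 𝓝 x0, ‖F z - F x0 - L (z - x0)‖ ≤ ε' * ‖z - x0‖ := by
      exact ((hFdiff x0 hx0X).hasFDerivAt).isLittleO.def hε'pos
    have hr1 : ∀ᶠ z in 𝓝 x0, ‖φ z y1 - φ x0 y1 - L (z - x0)‖ ≤ ε' * ‖z - x0‖ := by
      have hd : HasFDerivAt (fun z => φ z y1) L x0 := by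
        rw [← henv]
        exact (hφdiff y1 x0).hasFDerivAt
      exact hd.isLittleO.def hε'pos
    have hr0 : ∀ᶠ z in 𝓝 x0, ‖φ z y0 - φ x0 y0‖ ≤ ε' * ‖z - x0‖ := by
      have hd : HasFDerivAt (fun z => φ z y0) (0 : Euc d →L[ℝ] ℝ) x0 := by
        rw [← hf0]
        exact (hφdiff y0 x0).hasFDerivAt
      have := hd.isLittleO.def hε'pos
      simpa using this
    -- transfer to t
    have hall : ∀ᶠ t in 𝓝 (0:ℝ),
        (‖F (γt t) - F x0 - L (γt t - x0)‖ ≤ ε' * ‖γt t - x0‖ ∧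
         ‖φ (γt t) y1 - φ x0 y1 - L (γt t - x0)‖ ≤ ε' * ‖γt t - x0‖ ∧
         ‖φ (γt t) y0 - φ x0 y0‖ ≤ ε' * ‖γt t - x0‖) := by
      have hcont' : Filter.Tendsto γt (𝓝 0) (𝓝 x0) := by
        have := hγtcont.tendsto
        rwa [hγt0] at this
      exact hcont'.eventually ((hrF.and (hr1.and hr0)))
    obtain ⟨ε₂, hε₂pos, hε₂⟩ := Metric.eventually_nhds_iff.mp hall
    set t : ℝ := min (ε₂ / 2) δ with htdef
    have htpos : 0 < t := by positivity
    have htδ : t ≤ δ := min_le_right _ _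
    have ht1 : t ≤ 1 / 2 := le_trans htδ hδle
    have htabs : |t| ≤ δ := by rw [abs_of_pos htpos]; exact htδ
    have htε₂ : dist t 0 < ε₂ := by
      rw [Real.dist_eq, sub_zero, abs_of_pos htpos]
      calc t ≤ ε₂ / 2 := min_le_left _ _
      _ < ε₂ := by linarith
    obtain ⟨hbF, hb1, hb0⟩ := hε₂ htε₂
    obtain ⟨hgradt, hXt, hCt⟩ := hδsmall t htabs
    have hγ''t : γ'' t = γt t := by simp only [hγ''def, if_pos htδ]
    set z := γt t with hzdef
    set Δ : ℝ := ‖z - x0‖ with hΔdef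
    have hΔC : Δ ≤ C * t := by
      have : ‖t‖ = t := by rw [Real.norm_eq_abs, abs_of_pos htpos]
      rw [hΔdef]
      calc ‖z - x0‖ ≤ C * ‖t‖ := hCt
      _ = C * t := by rw [this]
    -- the difference H t - H 0
    have hHt : H t - H 0 = (F z - F x0 - L (z - x0))
        + (1 - lam) * (φ z y0 - φ x0 y0)
        - (φ z y1 - φ x0 y1 - L (z - x0)) := by
      rw [hHdef]
      simp only [hγ''t, hγ''0]
      rw [hφ' z y1, hφ' z y0, hφ' x0 y1, hφ' x0 y0]
      ring
    have habs : H t - H 0 ≥ -(K * (ε' * Δ)) := by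
      rw [hHt]
      have e1 : ‖F z - F x0 - L (z - x0)‖ ≤ ε' * Δ := hbF
      have e2 : ‖φ z y1 - φ x0 y1 - L (z - x0)‖ ≤ ε' * Δ := hb1
      have e3 : ‖φ z y0 - φ x0 y0‖ ≤ ε' * Δ := hb0
      rw [Real.norm_eq_abs] at e1 e2 e3
      have a1 := abs_le.mp e1
      have a2 := abs_le.mp e2
      have a3 := abs_le.mp e3
      have h2 : -(|1 - lam| * (ε' * Δ)) ≤ (1 - lam) * (φ z y0 - φ x0 y0) := by
        have habk : |(1 - lam) * (φ z y0 - φ x0 y0)| ≤ |1 - lam| * (ε' * Δ) := by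
          rw [abs_mul]
          exact mul_le_mul_of_nonneg_left e3 (abs_nonneg _)
        linarith [neg_abs_le ((1 - lam) * (φ z y0 - φ x0 y0)), (abs_le.mp habk).2,
          (abs_le.mp habk).1]
      rw [hKdef]
      have a1' := a1.1
      have a2' := a2.2
      linarith
    -- convexity inequality at t
    have hconvt : H t ≤ (1 - t) * H 0 + t * H 1 := by
      have h0mem : (0:ℝ) ∈ Set.Icc (0:ℝ) 1 := by constructor <;> norm_num
      have h1mem : (1:ℝ) ∈ Set.Icc (0:ℝ) 1 := by constructor <;> norm_num
      have := hHconv.2 h0mem h1mem (by linarith : (0:ℝ) ≤ 1 - t) htpos.le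
        (by ring : (1 - t) + t = 1)
      simpa using this
    set M : ℝ := K * (ε' * C) with hMdef
    have h1 : -(M * t) ≤ H t - H 0 := by
      have hΔ2 : K * (ε' * Δ) ≤ M * t := by
        rw [hMdef]
        have : K * (ε' * Δ) ≤ K * (ε' * (C * t)) :=
          mul_le_mul_of_nonneg_left (mul_le_mul_of_nonneg_left hΔC hε'pos.le) hKpos.le
        linarith [this, (by ring : K * (ε' * (C * t)) = K * (ε' * C) * t)]
      linarith [habs]
    have hM1 : t * -M ≤ t * (H 1 - H 0) := by linarith [hconvt, h1]
    have hM2 : -M ≤ H 1 - H 0 := (mul_le_mul_iff_right₀ htpos).mp hM1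
    have hKC : K * C ≤ (3 + |1 - lam|) * (C + 1) := by
      rw [hKdef]
      linarith [abs_nonneg (1 - lam), hCpos]
    have hden : (0:ℝ) < (3 + |1 - lam|) * (C + 1) := by positivity
    have hMε : M ≤ ε := by
      have hMeq : M = ε * (K * C) / ((3 + |1 - lam|) * (C + 1)) := by
        rw [hMdef, hε'def]; ring
      rw [hMeq, div_le_iff₀ hden]
      calc ε * (K * C) ≤ ε * ((3 + |1 - lam|) * (C + 1)) :=
            mul_le_mul_of_nonneg_left hKC hε.le
      _ = ε * ((3 + |1 - lam|) * (C + 1)) := rfl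
    linarith
  -- conclusion
  have hH0 : H 0 = (1 - lam) * φ x0 y0 + h y1 - h y0 := by
    rw [hHdef]
    simp only [hγ''0]
    rw [hFx0, hφ' x0 y1, hφ' x0 y0]
    ring
  have hH1 : H 1 = F x - lam * φ x y0 - φ x y1 + φ x y0 + h y1 - h y0 := by
    rw [hHdef]
    simp only [hγ''1]
    rw [hφ' x y1, hφ' x y0]
    ring
  rw [hH0, hH1] at hH01
  linarith

end Aux

/-- **Semi-local criterion for the five-point property.**
Let `φ(x,y) = c(x,y) + g(x) + h(y)` satisfy (A1) (encoded by the
unique-minimizer maps `T`, `S`), let `c` satisfy (A2) and have nonnegative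
cross-curvature, and let `F(x) = inf_{y∈Y} φ(x,y)` be differentiable on `X`.
(i) If `t ↦ F (γ t)` is convex along every horizontal `c`-segment `(γ, y)` with
`∇ₓ φ (γ 0, y) = 0`, then `φ` satisfies (FP).
(ii) For `λ > 0`, if `t ↦ F (γ t) - λ φ (γ t, y)` is convex along the same
`c`-segments, then `φ` satisfies (λ-FP). -/
theorem semilocal_criterion_five_point {d : ℕ}
    (X Y : Set (Euc d)) (hX : IsOpen X) (hY : IsOpen Y)
    (hXne : X.Nonempty) (hYne : Y.Nonempty)
    (c : Euc d → Euc d → ℝ) (g h : Euc d → ℝ)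
    (φ : Euc d → Euc d → ℝ)
    (hφ : φ = fun x y => c x y + g x + h y)
    (hc4 : ContDiff ℝ 4 (Function.uncurry c))
    (hg : Differentiable ℝ g) (hh : Differentiable ℝ h)
    -- (A2a) non-degeneracy of the mixed second derivative of c
    (hA2a : ∀ x ∈ X, ∀ y ∈ Y,
      Function.Bijective (fderiv ℝ (fun y' => gradX c x y') y))
    -- (A2b) existence of horizontal and vertical c-segments joining any two points
    (hA2bH : ∀ x ∈ X, ∀ x' ∈ X, ∀ y ∈ Y,
      ∃ γ : ℝ → Euc d, IsHorizCSeg X c γ y ∧ γ 0 = x ∧ γ 1 = x')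
    (hA2bV : ∀ y ∈ Y, ∀ y' ∈ Y, ∀ x ∈ X,
      ∃ γ : ℝ → Euc d, IsVertCSeg Y c x γ ∧ γ 0 = y ∧ γ 1 = y')
    (hcc : NonnegCrossCurv X Y c)
    -- (A1) unique partial minimizers of φ, encoded by T and S
    (T S : Euc d → Euc d)
    (hT : ∀ x ∈ X, T x ∈ Y ∧ (∀ y' ∈ Y, φ x (T x) ≤ φ x y') ∧
      ∀ y ∈ Y, (∀ y' ∈ Y, φ x y ≤ φ x y') → y = T x)
    (hS : ∀ y ∈ Y, S y ∈ X ∧ (∀ x' ∈ X, φ (S y) y ≤ φ x' y) ∧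
      ∀ x ∈ X, (∀ x' ∈ X, φ x y ≤ φ x' y) → x = S y)
    (F : Euc d → ℝ)
    (hF : ∀ x ∈ X, IsGLB ((fun y => φ x y) '' Y) (F x))
    (hFdiff : ∀ x ∈ X, DifferentiableAt ℝ F x) :
    -- (i)
    ((∀ y ∈ Y, ∀ γ : ℝ → Euc d, IsHorizCSeg X c γ y →
        gradient (fun x' => φ x' y) (γ 0) = 0 →
        ConvexOn ℝ (Set.Icc (0 : ℝ) 1) (fun t => F (γ t))) →
      ∀ x ∈ X, ∀ y ∈ Y, ∀ y0 ∈ Y,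
        φ x (T (S y0)) + φ (S y0) y0 ≤ φ x y + φ x y0) ∧
    -- (ii)
    (∀ lam : ℝ, 0 < lam →
      (∀ y ∈ Y, ∀ γ : ℝ → Euc d, IsHorizCSeg X c γ y →
        gradient (fun x' => φ x' y) (γ 0) = 0 →
        ConvexOn ℝ (Set.Icc (0 : ℝ) 1) (fun t => F (γ t) - lam * φ (γ t) y)) →
      ∀ x ∈ X, ∀ y ∈ Y, ∀ y0 ∈ Y,
        φ x (T (S y0)) + (1 - lam) * φ (S y0) y0 ≤
          φ x y + (1 - lam) * φ x y0) := by
  constructor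
  · intro hyp x hx y hy y0 hy0
    have key := key_lemma X Y hX c g h φ hφ hc4 hg hA2a hA2bH hcc T S hT hS F hF hFdiff 0
      (fun y' hy' γ hseg hgrad => by simpa using hyp y' hy' γ hseg hgrad)
      x hx y hy y0 hy0
    linarith [key]
  · intro lam _hlam hyp x hx y hy y0 hy0
    exact key_lemma X Y hX c g h φ hφ hc4 hg hA2a hA2bH hcc T S hT hS F hF hFdiff lam
      hyp x hx y hy y0 hy0
end

section
/- Semi-local criterion for cross-convexity: let c satisfy assumption (A2) and (A4a), have nonnegative cross-curvature in the Kim–McCann sense, and let f : X → ℝ be differentiable. (i) If t ↦ f(x(t)) is convex along every horizontal c-segment t ↦ (x(t),ȳ) satisfying ∇_x c(x(0),ȳ) = 0, then f is c-cross-convex. (ii) For λ > 0, if t ↦ f(x(t)) − λ·c(x(t),ȳ) is convex on the same c-segments, then f is λ-strongly c-cross-convex. -/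
open Set

open Function ContinuousLinearMap InnerProductSpace

variable {E : Type*} [NormedAddCommGroup E] [NormedSpace ℝ E]
variable {F : Type*} [NormedAddCommGroup F] [NormedSpace ℝ F]
variable {G : Type*} [NormedAddCommGroup G] [NormedSpace ℝ G]

lemma pfderiv1 {u : E × F → G} (x : E) (y : F) (hu : DifferentiableAt ℝ u (x, y)) :
    fderiv ℝ (fun x' => u (x', y)) x = (fderiv ℝ u (x, y)).comp (inl ℝ E F) :=
  (hu.hasFDerivAt.comp x (hasFDerivAt_prodMk_left x y)).fderiv

lemma pfderiv2 {u : E × F → G} (x : E) (y : F) (hu : DifferentiableAt ℝ u (x, y)) :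
    fderiv ℝ (fun y' => u (x, y')) y = (fderiv ℝ u (x, y)).comp (inr ℝ E F) :=
  (hu.hasFDerivAt.comp y (hasFDerivAt_prodMk_right x y)).fderiv

noncomputable def dIso (d : ℕ) : (StrongDual ℝ (Euc d)) →L[ℝ] Euc d :=
  LinearMap.mkContinuous
    { toFun := fun ℓ => (toDual ℝ (Euc d)).symm ℓ
      map_add' := fun a b => by simp
      map_smul' := fun r a => by simp [starRingEnd_apply] } 1
    (fun ℓ => by simp)

@[simp] lemma dIso_eval {d : ℕ} (ℓ : StrongDual ℝ (Euc d)) :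
    dIso d ℓ = (toDual ℝ (Euc d)).symm ℓ := rfl

lemma dIso_apply {d : ℕ} (ℓ : StrongDual ℝ (Euc d)) (w : Euc d) :
    (inner ℝ (dIso d ℓ) w : ℝ) = ℓ w := toDual_symm_apply

noncomputable def pre1 (d : ℕ) : ((Euc d × Euc d) →L[ℝ] ℝ) →L[ℝ] (Euc d →L[ℝ] ℝ) :=
  (ContinuousLinearMap.compL ℝ (Euc d) (Euc d × Euc d) ℝ).flip (inl ℝ (Euc d) (Euc d))

noncomputable def pre2 (d : ℕ) : ((Euc d × Euc d) →L[ℝ] ℝ) →L[ℝ] (Euc d →L[ℝ] ℝ) :=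
  (ContinuousLinearMap.compL ℝ (Euc d) (Euc d × Euc d) ℝ).flip (inr ℝ (Euc d) (Euc d))

@[simp] lemma pre1_eval {d : ℕ} (L : (Euc d × Euc d) →L[ℝ] ℝ) :
    pre1 d L = L.comp (inl ℝ (Euc d) (Euc d)) := rfl
@[simp] lemma pre2_eval {d : ℕ} (L : (Euc d × Euc d) →L[ℝ] ℝ) :
    pre2 d L = L.comp (inr ℝ (Euc d) (Euc d)) := rfl

section
variable {d : ℕ} {c : Euc d → Euc d → ℝ}

lemma gradX_eq (hc : ContDiff ℝ 4 (uncurry c)) (x y : Euc d) :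
    gradX c x y = (dIso d) (pre1 d (fderiv ℝ (uncurry c) (x, y))) := by
  have h := pfderiv1 (u := uncurry c) x y (hc.differentiable (by norm_num) _)
  simp only [gradX, gradient, dIso_eval, pre1_eval]
  rw [show (fun x' => c x' y) = (fun x' => uncurry c (x', y)) from rfl, h]

lemma gradY_eq (hc : ContDiff ℝ 4 (uncurry c)) (x y : Euc d) :
    gradY c x y = (dIso d) (pre2 d (fderiv ℝ (uncurry c) (x, y))) := by
  have h := pfderiv2 (u := uncurry c) x y (hc.differentiable (by norm_num) _)
  simp only [gradY, gradient, dIso_eval, pre2_eval]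
  rw [show (fun y' => c x y') = (fun y' => uncurry c (x, y')) from rfl, h]
end

section
variable {d : ℕ} {c : Euc d → Euc d → ℝ}

lemma fderiv_gradX_snd (hc : ContDiff ℝ 4 (uncurry c)) (x y : Euc d) :
    fderiv ℝ (fun y' => gradX c x y') y
      = ((dIso d).comp (pre1 d)).comp
          ((fderiv ℝ (fderiv ℝ (uncurry c)) (x, y)).comp (inr ℝ (Euc d) (Euc d))) := by
  have hfd : ContDiff ℝ 3 (fderiv ℝ (uncurry c)) := hc.fderiv_right (by norm_num)
  have h2 : HasFDerivAt (fun y' => fderiv ℝ (uncurry c) (x, y'))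
      ((fderiv ℝ (fderiv ℝ (uncurry c)) (x, y)).comp (inr ℝ (Euc d) (Euc d))) y :=
    ((hfd.differentiable (by norm_num) (x, y)).hasFDerivAt).comp y
      (hasFDerivAt_prodMk_right x y)
  have h3 := ((dIso d).comp (pre1 d)).hasFDerivAt.comp y h2
  have heq : (fun y' => gradX c x y')
      = fun y' => ((dIso d).comp (pre1 d)) (fderiv ℝ (uncurry c) (x, y')) :=
    funext fun y' => gradX_eq hc x y'
  rw [heq]
  exact h3.fderiv

lemma fderiv_gradY_fst (hc : ContDiff ℝ 4 (uncurry c)) (x y : Euc d) :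
    fderiv ℝ (fun x' => gradY c x' y) x
      = ((dIso d).comp (pre2 d)).comp
          ((fderiv ℝ (fderiv ℝ (uncurry c)) (x, y)).comp (inl ℝ (Euc d) (Euc d))) := by
  have hfd : ContDiff ℝ 3 (fderiv ℝ (uncurry c)) := hc.fderiv_right (by norm_num)
  have h2 : HasFDerivAt (fun x' => fderiv ℝ (uncurry c) (x', y))
      ((fderiv ℝ (fderiv ℝ (uncurry c)) (x, y)).comp (inl ℝ (Euc d) (Euc d))) x :=
    ((hfd.differentiable (by norm_num) (x, y)).hasFDerivAt).comp x
      (hasFDerivAt_prodMk_left x y)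
  have h3 := ((dIso d).comp (pre2 d)).hasFDerivAt.comp x h2
  have heq : (fun x' => gradY c x' y)
      = fun x' => ((dIso d).comp (pre2 d)) (fderiv ℝ (uncurry c) (x', y)) :=
    funext fun x' => gradY_eq hc x' y
  rw [heq]
  exact h3.fderiv

lemma bij_swap (hc : ContDiff ℝ 4 (uncurry c)) (x y : Euc d)
    (hK : Function.Bijective (fderiv ℝ (fun y' => gradX c x y') y)) :
    Function.Bijective (fderiv ℝ (fun x' => gradY c x' y) x) := by
  set B := fderiv ℝ (fderiv ℝ (uncurry c)) (x, y) with hB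
  have hsym : ∀ v w, B v w = B w v :=
    (hc.contDiffAt.isSymmSndFDerivAt (by norm_num)).eq
  rw [fderiv_gradX_snd hc x y] at hK
  rw [fderiv_gradY_fst hc x y]
  set M := ((dIso d).comp (pre2 d)).comp (B.comp (inl ℝ (Euc d) (Euc d))) with hM
  set K := ((dIso d).comp (pre1 d)).comp (B.comp (inr ℝ (Euc d) (Euc d))) with hKdef
  have hinnK : ∀ v w : Euc d, (inner ℝ (K v) w : ℝ) = B (inr ℝ (Euc d) (Euc d) v) (inl ℝ (Euc d) (Euc d) w) := by
    intro v w
    simp only [hKdef, ContinuousLinearMap.comp_apply, pre1_eval]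
    exact dIso_apply _ _
  have hinnM : ∀ w v : Euc d, (inner ℝ (M w) v : ℝ) = B (inl ℝ (Euc d) (Euc d) w) (inr ℝ (Euc d) (Euc d) v) := by
    intro w v
    simp only [hM, ContinuousLinearMap.comp_apply, pre2_eval]
    exact dIso_apply _ _
  have hinj : Function.Injective ⇑M := by
    rw [injective_iff_map_eq_zero]
    intro w hw
    have h0 : ∀ v : Euc d, (inner ℝ (K v) w : ℝ) = 0 := by
      intro v
      rw [hinnK, hsym]
      rw [← hinnM, hw, inner_zero_left]
    obtain ⟨v, hv⟩ := hK.surjective w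
    have := h0 v
    rw [hv, inner_self_eq_zero] at this
    exact this
  refine ⟨hinj, ?_⟩
  have := LinearMap.injective_iff_surjective (f := (M : Euc d →ₗ[ℝ] Euc d))
  rw [ContinuousLinearMap.coe_coe] at this
  exact this.mp hinj
end

set_option maxHeartbeats 1000000 in
lemma key {d : ℕ} {c : Euc d → Euc d → ℝ} (X : Set (Euc d)) (hX : IsOpen X)
    (hc : ContDiff ℝ 4 (uncurry c)) (x xb yb : Euc d) (hxb : xb ∈ X)
    (hK : Function.Bijective (fderiv ℝ (fun y' => gradX c xb y') yb))
    (γ₀ : ℝ → Euc d) (hγ₀ : IsHorizCSeg X c γ₀ yb) (h0 : γ₀ 0 = xb) (h1 : γ₀ 1 = x)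
    (F : Euc d → ℝ) (hFd : DifferentiableAt ℝ F xb) (hF0 : fderiv ℝ F xb = 0)
    (hconv : ∀ γ : ℝ → Euc d, IsHorizCSeg X c γ yb → γ 0 = xb → γ 1 = x →
      ConvexOn ℝ (Set.Icc (0:ℝ) 1) (fun t => F (γ t))) :
    F xb ≤ F x := by
  obtain ⟨hmem₀, a, b, hab₀⟩ := hγ₀
  -- the map G and its local inverse
  set G : Euc d → Euc d := fun z => gradY c z yb with hGdef
  have hGrep : G = fun z => ((dIso d).comp (pre2 d)) (fderiv ℝ (uncurry c) (z, yb)) :=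
    funext fun z => gradY_eq hc z yb
  have hG : ContDiff ℝ 3 G := by
    rw [hGrep]
    exact ((dIso d).comp (pre2 d)).contDiff.comp
      ((hc.fderiv_right (by norm_num)).comp (contDiff_id.prodMk contDiff_const))
  have hMbij : Function.Bijective (fderiv ℝ G xb) := bij_swap hc xb yb hK
  set M := fderiv ℝ G xb with hMdef
  let e' : Euc d ≃L[ℝ] Euc d :=
    (LinearEquiv.ofBijective (M : Euc d →ₗ[ℝ] Euc d)
      (by rwa [ContinuousLinearMap.coe_coe])).toContinuousLinearEquiv
  have hcoe : (e' : Euc d →L[ℝ] Euc d) = M := by ext v; rfl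
  have hstrict : HasStrictFDerivAt G (e' : Euc d →L[ℝ] Euc d) xb := by
    rw [hcoe]
    exact hG.contDiffAt.hasStrictFDerivAt (by norm_num)
  set linv := hstrict.localInverse G e' xb with hlinvdef
  have hlinv_img : linv (G xb) = xb := hstrict.localInverse_apply_image
  have hlinv_rinv : ∀ᶠ z in nhds (G xb), G (linv z) = z := hstrict.eventually_right_inverse
  have hlinv_strict : HasStrictFDerivAt linv (e'.symm : Euc d →L[ℝ] Euc d) (G xb) :=
    hstrict.to_localInverse
  -- basic facts
  have ha : G xb = a := by
    have := hab₀ 0 ⟨le_rfl, zero_le_one⟩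
    rw [h0] at this
    simpa using this
  set ρ : ℝ → Euc d := fun t => linv (a + t • b) with hρdef
  have htend : Filter.Tendsto (fun t : ℝ => a + t • b) (nhds 0) (nhds (G xb)) := by
    have hcont : Continuous (fun t : ℝ => a + t • b) := continuous_const.add (continuous_id.smul continuous_const)
    have := hcont.tendsto 0
    simpa [ha] using this
  have hρ0 : ρ 0 = xb := by
    simp only [hρdef, zero_smul, add_zero, ← ha, hlinv_img]
  have hρtend : Filter.Tendsto ρ (nhds 0) (nhds xb) := by
    have := (hlinv_strict.continuousAt.tendsto).comp htend
    rwa [hlinv_img] at this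
  have hevent : ∀ᶠ t : ℝ in nhds 0, ρ t ∈ X ∧ G (ρ t) = a + t • b := by
    have e1 : ∀ᶠ t : ℝ in nhds 0, G (ρ t) = a + t • b := htend.eventually hlinv_rinv
    have e2 : ∀ᶠ t : ℝ in nhds 0, ρ t ∈ X := hρtend.eventually (hX.eventually_mem hxb)
    exact e2.and e1
  obtain ⟨ε, hε, hεP⟩ := Metric.eventually_nhds_iff.mp hevent
  set ε' : ℝ := min ε 1 with hε'def
  have hε'pos : 0 < ε' := lt_min hε one_pos
  have hε'le1 : ε' ≤ 1 := min_le_right _ _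
  set γ : ℝ → Euc d := fun t => if t < ε' then ρ t else γ₀ t with hγdef
  have hγP : ∀ t ∈ Set.Icc (0:ℝ) 1, t < ε' → (ρ t ∈ X ∧ G (ρ t) = a + t • b) := by
    intro t ht htε
    apply hεP
    rw [Real.dist_eq, sub_zero, abs_of_nonneg ht.1]
    exact lt_of_lt_of_le htε (min_le_left _ _)
  have hseg : IsHorizCSeg X c γ yb := by
    constructor
    · intro s hs
      simp only [hγdef]
      split_ifs with h
      · exact (hγP s hs h).1
      · exact hmem₀ s hs
    · refine ⟨a, b, fun s hs => ?_⟩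
      simp only [hγdef]
      split_ifs with h
      · exact (hγP s hs h).2
      · exact hab₀ s hs
  have hγ0 : γ 0 = xb := by
    simp only [hγdef, if_pos hε'pos]
    exact hρ0
  have hγ1 : γ 1 = x := by
    simp only [hγdef, if_neg (not_lt.mpr hε'le1)]
    exact h1
  have hconvφ := hconv γ hseg hγ0 hγ1
  set φ : ℝ → ℝ := fun t => F (γ t) with hφdef
  -- derivative of φ at 0 within Icc 0 1 is 0
  have haff : HasDerivAt (fun t : ℝ => a + t • b) b 0 := by
    simpa using ((hasDerivAt_id (0:ℝ)).smul_const b).const_add a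
  have hpt : a + (0:ℝ) • b = G xb := by simp [ha]
  have hlinv_fd : HasFDerivAt linv (e'.symm : Euc d →L[ℝ] Euc d) (a + (0:ℝ) • b) := by
    rw [hpt]; exact hlinv_strict.hasFDerivAt
  have hρder : HasDerivAt ρ (e'.symm b) 0 := by
    have := hlinv_fd.comp_hasDerivAt 0 haff; exact this
  have hF0' : HasFDerivAt F (0 : Euc d →L[ℝ] ℝ) (ρ 0) := by
    rw [hρ0, ← hF0]; exact hFd.hasFDerivAt
  have hcomp : HasDerivAt (fun t => F (ρ t)) 0 0 := by
    have := hF0'.comp_hasDerivAt 0 hρder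
    simp at this; exact this
  have hφeq : ∀ᶠ t : ℝ in nhdsWithin 0 (Set.Icc (0:ℝ) 1), φ t = F (ρ t) := by
    apply Filter.Eventually.filter_mono nhdsWithin_le_nhds
    filter_upwards [Iio_mem_nhds hε'pos] with t ht
    simp only [hφdef, hγdef]
    rw [if_pos (Set.mem_Iio.mp ht)]
  have hφder : HasDerivWithinAt φ 0 (Set.Icc (0:ℝ) 1) 0 := by
    refine (hcomp.hasDerivWithinAt).congr_of_eventuallyEq hφeq ?_
    simp only [hφdef, hγdef]
    rw [if_pos hε'pos]
  -- slope argument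
  have hslope : ∀ t ∈ Set.Icc (0:ℝ) 1 \ {0}, slope φ 0 t ≤ φ 1 - φ 0 := by
    rintro t ⟨⟨ht0, ht1⟩, htne⟩
    have ht0' : 0 < t := lt_of_le_of_ne ht0 (Ne.symm (by simpa using htne))
    have hcvx := hconvφ.2 (Set.left_mem_Icc.mpr zero_le_one)
      (Set.right_mem_Icc.mpr zero_le_one)
      (show (0:ℝ) ≤ 1 - t by linarith) ht0'.le (by ring : (1 - t) + t = 1)
    simp only [smul_eq_mul, mul_zero, mul_one, zero_add] at hcvx
    rw [slope_def_field]
    rw [sub_zero, div_le_iff₀ ht0']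
    nlinarith [hcvx]
  have hne : (nhdsWithin (0:ℝ) (Set.Icc (0:ℝ) 1 \ {0})).NeBot := by
    have hsub : Set.Ioc (0:ℝ) 1 ⊆ Set.Icc (0:ℝ) 1 \ {0} :=
      fun t ht => ⟨⟨ht.1.le, ht.2⟩, by simpa using ne_of_gt ht.1⟩
    have h1 : (nhdsWithin (0:ℝ) (Set.Ioc (0:ℝ) 1)).NeBot := by
      rw [nhdsWithin_Ioc_eq_nhdsGT zero_lt_one]
      infer_instance
    exact h1.mono (nhdsWithin_mono 0 hsub)
  have htends := hasDerivWithinAt_iff_tendsto_slope.mp hφder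
  have hfinal : (0:ℝ) ≤ φ 1 - φ 0 :=
    le_of_tendsto htends (eventually_mem_nhdsWithin.mono fun t ht => hslope t ht)
  have hφ1 : φ 1 = F x := by simp only [hφdef]; rw [hγ1]
  have hφ0 : φ 0 = F xb := by simp only [hφdef]; rw [hγ0]
  linarith

section MAIN
variable {d : ℕ} {c : Euc d → Euc d → ℝ}

lemma diff_c1 (hc : ContDiff ℝ 4 (uncurry c)) (y : Euc d) :
    Differentiable ℝ (fun z => c z y) :=
  (hc.differentiable (by norm_num)).comp (differentiable_id.prodMk (differentiable_const _))

lemma grad_zero {g : Euc d → ℝ} {x : Euc d} (h : gradient g x = 0) :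
    fderiv ℝ g x = 0 := by
  have h2 := congrArg (toDual ℝ (Euc d)) h
  simpa [gradient] using h2

lemma grad_eq_fderiv {g h : Euc d → ℝ} {x : Euc d}
    (hgr : gradient g x = gradient h x) : fderiv ℝ g x = fderiv ℝ h x := by
  have h2 := congrArg (toDual ℝ (Euc d)) hgr
  simpa [gradient] using h2

end MAIN

/-- **Semi-local criterion for cross-convexity.**
Let `c` satisfy (A2) and (A4a) and have nonnegative cross-curvature, and let `f`
be differentiable. (i) If `t ↦ f (γ t)` is convex along every horizontal
`c`-segment `(γ, ȳ)` with `∇ₓ c (γ 0, ȳ) = 0`, then `f` is `c`-cross-convex.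
(ii) For `λ > 0`, if `t ↦ f (γ t) - λ c (γ t, ȳ)` is convex along the same
`c`-segments, then `f` is λ-strongly `c`-cross-convex. -/
theorem semilocal_criterion_cross_convexity {d : ℕ}
    (X Y : Set (Euc d)) (hX : IsOpen X) (hY : IsOpen Y)
    (hXne : X.Nonempty) (hYne : Y.Nonempty)
    (c : Euc d → Euc d → ℝ) (f : Euc d → ℝ)
    (hc4 : ContDiff ℝ 4 (Function.uncurry c))
    (hf : Differentiable ℝ f)
    (hA2a : ∀ x ∈ X, ∀ y ∈ Y,
      Function.Bijective (fderiv ℝ (fun y' => gradX c x y') y))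
    (hA2bH : ∀ x ∈ X, ∀ x' ∈ X, ∀ y ∈ Y,
      ∃ γ : ℝ → Euc d, IsHorizCSeg X c γ y ∧ γ 0 = x ∧ γ 1 = x')
    (hA2bV : ∀ y ∈ Y, ∀ y' ∈ Y, ∀ x ∈ X,
      ∃ γ : ℝ → Euc d, IsVertCSeg Y c x γ ∧ γ 0 = y ∧ γ 1 = y')
    (hA4a : ∀ y ∈ Y, ∃! x, x ∈ X ∧ ∀ x' ∈ X, c x y ≤ c x' y)
    (hcc : NonnegCrossCurv X Y c) :
    -- (i)
    ((∀ yb ∈ Y, ∀ γ : ℝ → Euc d, IsHorizCSeg X c γ yb →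
        gradX c (γ 0) yb = 0 →
        ConvexOn ℝ (Set.Icc (0 : ℝ) 1) (fun t => f (γ t))) →
      ∀ x ∈ X, ∀ xb ∈ X, ∀ yb ∈ Y, ∀ yh ∈ Y,
        gradX c xb yb = 0 → gradX c xb yh = gradient f xb →
        f xb + crossDiff c x yb xb yh ≤ f x) ∧
    -- (ii)
    (∀ lam : ℝ, 0 < lam →
      (∀ yb ∈ Y, ∀ γ : ℝ → Euc d, IsHorizCSeg X c γ yb →
        gradX c (γ 0) yb = 0 →
        ConvexOn ℝ (Set.Icc (0 : ℝ) 1) (fun t => f (γ t) - lam * c (γ t) yb)) →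
      ∀ x ∈ X, ∀ xb ∈ X, ∀ yb ∈ Y, ∀ yh ∈ Y,
        gradX c xb yb = 0 → gradX c xb yh = gradient f xb →
        f xb + crossDiff c x yb xb yh + lam * (c x yb - c xb yb) ≤ f x) := by
  classical
  constructor
  · intro H x hx xb hxb yb hyb yh hyh hgb hgh
    obtain ⟨γ₀, hγ₀, h00, h11⟩ := hA2bH xb hxb x hx yb hyb
    set F : Euc d → ℝ := fun z => f z - c z yh + c z yb with hFdef
    have hd1 := diff_c1 hc4 yh
    have hd2 := diff_c1 hc4 yb
    have hFd : DifferentiableAt ℝ F xb := ((hf xb).sub (hd1 xb)).add (hd2 xb)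
    have hz : fderiv ℝ (fun z => c z yb) xb = 0 := grad_zero hgb
    have hfe : fderiv ℝ (fun z => c z yh) xb = fderiv ℝ f xb := grad_eq_fderiv hgh
    have hF0 : fderiv ℝ F xb = 0 := by
      have e1 : fderiv ℝ F xb
          = fderiv ℝ (fun z => f z - c z yh) xb + fderiv ℝ (fun z => c z yb) xb :=
        fderiv_add ((hf xb).sub (hd1 xb)) (hd2 xb)
      have e2 : fderiv ℝ (fun z => f z - c z yh) xb
          = fderiv ℝ f xb - fderiv ℝ (fun z => c z yh) xb := fderiv_sub (hf xb) (hd1 xb)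
      rw [e1, e2, hfe, hz]; simp
    have hconv : ∀ γ : ℝ → Euc d, IsHorizCSeg X c γ yb → γ 0 = xb → γ 1 = x →
        ConvexOn ℝ (Set.Icc (0:ℝ) 1) (fun t => F (γ t)) := by
      intro γ hseg hγ0 hγ1
      have h1 := H yb hyb γ hseg (by rw [hγ0]; exact hgb)
      have h2 := hcc yb hyb yh hyh γ hseg
      have h3 := h1.add h2
      have heq : (fun t => F (γ t)) = fun t => f (γ t) + (-c (γ t) yh + c (γ t) yb) := by
        funext t; simp only [hFdef]; ring
      rw [heq]; exact h3
    have hkey := key X hX hc4 x xb yb hxb (hA2a xb hxb yb hyb) γ₀ hγ₀ h00 h11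
      F hFd hF0 hconv
    simp only [hFdef] at hkey
    simp only [crossDiff]
    linarith
  · intro lam hlam H x hx xb hxb yb hyb yh hyh hgb hgh
    obtain ⟨γ₀, hγ₀, h00, h11⟩ := hA2bH xb hxb x hx yb hyb
    set F : Euc d → ℝ := fun z => f z - c z yh + (1 - lam) * c z yb with hFdef
    have hd1 := diff_c1 hc4 yh
    have hd2 := diff_c1 hc4 yb
    have hFd : DifferentiableAt ℝ F xb :=
      ((hf xb).sub (hd1 xb)).add ((hd2 xb).const_mul (1 - lam))
    have hz : fderiv ℝ (fun z => c z yb) xb = 0 := grad_zero hgb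
    have hfe : fderiv ℝ (fun z => c z yh) xb = fderiv ℝ f xb := grad_eq_fderiv hgh
    have hF0 : fderiv ℝ F xb = 0 := by
      have e1 : fderiv ℝ F xb
          = fderiv ℝ (fun z => f z - c z yh) xb
            + fderiv ℝ (fun z => (1 - lam) * c z yb) xb :=
        fderiv_add ((hf xb).sub (hd1 xb)) ((hd2 xb).const_mul (1 - lam))
      have e2 : fderiv ℝ (fun z => f z - c z yh) xb
          = fderiv ℝ f xb - fderiv ℝ (fun z => c z yh) xb := fderiv_sub (hf xb) (hd1 xb)
      have e3 : fderiv ℝ (fun z => (1 - lam) * c z yb) xb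
          = (1 - lam) • fderiv ℝ (fun z => c z yb) xb := fderiv_const_mul (hd2 xb) _
      rw [e1, e2, e3, hfe, hz]; simp
    have hconv : ∀ γ : ℝ → Euc d, IsHorizCSeg X c γ yb → γ 0 = xb → γ 1 = x →
        ConvexOn ℝ (Set.Icc (0:ℝ) 1) (fun t => F (γ t)) := by
      intro γ hseg hγ0 hγ1
      have h1 := H yb hyb γ hseg (by rw [hγ0]; exact hgb)
      have h2 := hcc yb hyb yh hyh γ hseg
      have h3 := h1.add h2
      have heq : (fun t => F (γ t))
          = fun t => (f (γ t) - lam * c (γ t) yb) + (-c (γ t) yh + c (γ t) yb) := by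
        funext t; simp only [hFdef]; ring
      rw [heq]; exact h3
    have hkey := key X hX hc4 x xb yb hxb (hA2a xb hxb yb hyb) γ₀ hγ₀ h00 h11
      F hFd hF0 hconv
    simp only [hFdef] at hkey
    simp only [crossDiff]
    nlinarith [hkey]
end

section
/- Semi-local criterion for cross-concavity: let c satisfy assumption (A2) and (A4a), have nonnegative cross-curvature in the Kim–McCann sense, and let g : X → ℝ be differentiable. (i) If t ↦ g(x(t)) is convex along every horizontal c-segment t ↦ (x(t),ŷ) satisfying ∇_x c(x(0),ŷ) = −∇g(x(0)), then −g is c-cross-concave. (ii) For λ > 0, if t ↦ g(x(t)) − λ·c(x(t),y) is convex on the same c-segments, then −g is λ-strongly c-cross-concave. -/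
open Set

section AuxProofs

open InnerProductSpace ContinuousLinearMap

section Aux
variable {d : ℕ} {c : Euc d → Euc d → ℝ}

/-- partial derivative in x -/
lemma myFDerivFst (hc4 : ContDiff ℝ 4 (Function.uncurry c)) (x y : Euc d) :
    HasFDerivAt (fun x' => c x' y)
      ((fderiv ℝ (Function.uncurry c) (x, y)).comp (inl ℝ (Euc d) (Euc d))) x := by
  have h1 : HasFDerivAt (Function.uncurry c) (fderiv ℝ (Function.uncurry c) (x, y)) (x, y) :=
    ((hc4.differentiable (by norm_num)) (x, y)).hasFDerivAt
  exact h1.comp x (hasFDerivAt_prodMk_left (𝕜 := ℝ) x y)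

lemma myFDerivSnd (hc4 : ContDiff ℝ 4 (Function.uncurry c)) (x y : Euc d) :
    HasFDerivAt (fun y' => c x y')
      ((fderiv ℝ (Function.uncurry c) (x, y)).comp (inr ℝ (Euc d) (Euc d))) y := by
  have h1 : HasFDerivAt (Function.uncurry c) (fderiv ℝ (Function.uncurry c) (x, y)) (x, y) :=
    ((hc4.differentiable (by norm_num)) (x, y)).hasFDerivAt
  exact h1.comp y (hasFDerivAt_prodMk_right x y)

end Aux

section Aux2
variable {d : ℕ} {c : Euc d → Euc d → ℝ}

local notation "E" => Euc d
local notation "C" => Function.uncurry c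

/-- the continuous linear map sending a functional on E × E to the gradient-vector of its
second-slot restriction -/
noncomputable def Jsnd (d : ℕ) : ((Euc d × Euc d) →L[ℝ] ℝ) →L[ℝ] Euc d :=
  ((toDual ℝ (Euc d)).symm.toContinuousLinearEquiv.toContinuousLinearMap).comp
    ((ContinuousLinearMap.compL ℝ (Euc d) (Euc d × Euc d) ℝ).flip (inr ℝ (Euc d) (Euc d)))

noncomputable def Jfst (d : ℕ) : ((Euc d × Euc d) →L[ℝ] ℝ) →L[ℝ] Euc d :=
  ((toDual ℝ (Euc d)).symm.toContinuousLinearEquiv.toContinuousLinearMap).comp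
    ((ContinuousLinearMap.compL ℝ (Euc d) (Euc d × Euc d) ℝ).flip (inl ℝ (Euc d) (Euc d)))

lemma Jsnd_apply (L : (Euc d × Euc d) →L[ℝ] ℝ) :
    Jsnd d L = (toDual ℝ (Euc d)).symm (L.comp (inr ℝ (Euc d) (Euc d))) := rfl

lemma Jfst_apply (L : (Euc d × Euc d) →L[ℝ] ℝ) :
    Jfst d L = (toDual ℝ (Euc d)).symm (L.comp (inl ℝ (Euc d) (Euc d))) := rfl

lemma gradY_rep (hc4 : ContDiff ℝ 4 (Function.uncurry c)) (x y : Euc d) :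
    gradY c x y = Jsnd d (fderiv ℝ (Function.uncurry c) (x, y)) := by
  rw [Jsnd_apply, gradY, gradient, (myFDerivSnd hc4 x y).fderiv]

lemma gradX_rep (hc4 : ContDiff ℝ 4 (Function.uncurry c)) (x y : Euc d) :
    gradX c x y = Jfst d (fderiv ℝ (Function.uncurry c) (x, y)) := by
  rw [Jfst_apply, gradX, gradient, (myFDerivFst hc4 x y).fderiv]

end Aux2

open RealInnerProductSpace in
lemma exists_inv_strict {d : ℕ} {c : Euc d → Euc d → ℝ}
    (hc4 : ContDiff ℝ 4 (Function.uncurry c)) {xb yh : Euc d}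
    (hbij : Function.Bijective ⇑(fderiv ℝ (fun y' => gradX c xb y') yh)) :
    ∃ Ne : Euc d ≃L[ℝ] Euc d,
      HasStrictFDerivAt (fun x' => gradY c x' yh) (Ne : Euc d →L[ℝ] Euc d) xb := by
  set D := fderiv ℝ (Function.uncurry c) with hD
  have hD3 : ContDiff ℝ 3 D := hc4.fderiv_right (by norm_num)
  set A := fderiv ℝ D (xb, yh) with hA
  have hDd : HasFDerivAt D A (xb, yh) := ((hD3.differentiable (by norm_num)) _).hasFDerivAt
  -- derivative of y' ↦ gradX c xb y'
  have hMfun : (fun y' => gradX c xb y') = fun y' => Jfst d (D (xb, y')) := by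
    funext y'; exact gradX_rep hc4 xb y'
  have hM : HasFDerivAt (fun y' => gradX c xb y')
      ((Jfst d).comp (A.comp (inr ℝ (Euc d) (Euc d)))) yh := by
    rw [hMfun]
    exact (Jfst d).hasFDerivAt.comp yh (hDd.comp yh (hasFDerivAt_prodMk_right xb yh))
  set M := (Jfst d).comp (A.comp (inr ℝ (Euc d) (Euc d))) with hMdef
  -- derivative of x' ↦ gradY c x' yh
  have hNfun : (fun x' => gradY c x' yh) = fun x' => Jsnd d (D (x', yh)) := by
    funext x'; exact gradY_rep hc4 x' yh
  set N := (Jsnd d).comp (A.comp (inl ℝ (Euc d) (Euc d))) with hNdef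
  have hN : HasFDerivAt (fun x' => gradY c x' yh) N xb := by
    rw [hNfun]
    exact (Jsnd d).hasFDerivAt.comp xb (hDd.comp xb (hasFDerivAt_prodMk_left xb yh))
  have hstrict : HasStrictFDerivAt (fun x' => gradY c x' yh) N xb := by
    have h3 : ContDiff ℝ 3 (fun x' => Jsnd d (D (x', yh))) :=
      (Jsnd d).contDiff.comp (hD3.comp (contDiff_id.prodMk contDiff_const))
    have := (h3.contDiffAt (x := xb)).hasStrictFDerivAt (by norm_num)
    rw [← hNfun] at this
    rwa [hN.fderiv] at this
  -- pairings
  have hNpair : ∀ u v : Euc d, ⟪N u, v⟫ = A (u, 0) (0, v) := by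
    intro u v
    simp [hNdef, Jsnd_apply, toDual_symm_apply]
  have hMpair : ∀ v u : Euc d, ⟪M v, u⟫ = A (0, v) (u, 0) := by
    intro v u
    simp [hMdef, Jfst_apply, toDual_symm_apply]
  have hsym : ∀ p q : Euc d × Euc d, A p q = A q p :=
    second_derivative_symmetric
      (fun z => ((hc4.differentiable (by norm_num)) z).hasFDerivAt) hDd
  -- injectivity of N
  have hMbij : Function.Bijective ⇑M := by rwa [hM.fderiv] at hbij
  have hinj : Function.Injective ⇑N := by
    intro u u' huu
    have h0 : N (u - u') = 0 := by rw [map_sub, huu, sub_self]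
    have key : ∀ w : Euc d, ⟪w, u - u'⟫ = 0 := by
      intro w
      obtain ⟨v, hv⟩ := hMbij.2 w
      calc ⟪w, u - u'⟫ = ⟪M v, u - u'⟫ := by rw [hv]
        _ = A (0, v) (u - u', 0) := hMpair v (u - u')
        _ = A (u - u', 0) (0, v) := hsym _ _
        _ = ⟪N (u - u'), v⟫ := (hNpair _ _).symm
        _ = 0 := by rw [h0, inner_zero_left]
    have h1 : u - u' = 0 := by
      have := key (u - u')
      rwa [inner_self_eq_zero] at this
    exact sub_eq_zero.mp h1
  -- bijectivity, equiv
  have hinj' : Function.Injective ⇑(N : Euc d →ₗ[ℝ] Euc d) := hinj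
  have hsurj : Function.Surjective ⇑(N : Euc d →ₗ[ℝ] Euc d) :=
    LinearMap.injective_iff_surjective.mp hinj'
  let Ne := (LinearEquiv.ofBijective (N : Euc d →ₗ[ℝ] Euc d)
    ⟨hinj', hsurj⟩).toContinuousLinearEquiv
  have hcoe : (Ne : Euc d →L[ℝ] Euc d) = N := by
    ext v
    rfl
  exact ⟨Ne, by rw [hcoe]; exact hstrict⟩


open Filter Topology in
lemma key_mono {d : ℕ} {X : Set (Euc d)} (hX : IsOpen X) {c : Euc d → Euc d → ℝ}
    (hc4 : ContDiff ℝ 4 (Function.uncurry c))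
    {xb yh : Euc d} (hxbX : xb ∈ X)
    (hbij : Function.Bijective ⇑(fderiv ℝ (fun y' => gradX c xb y') yh))
    {φ : Euc d → ℝ} (hφ : HasFDerivAt φ (0 : Euc d →L[ℝ] ℝ) xb)
    {γ : ℝ → Euc d} (hγ : IsHorizCSeg X c γ yh) (hγ0 : γ 0 = xb)
    (hconv : ∀ Γ : ℝ → Euc d, IsHorizCSeg X c Γ yh → Γ 0 = xb →
      ConvexOn ℝ (Set.Icc (0:ℝ) 1) (fun s => φ (Γ s))) :
    φ xb ≤ φ (γ 1) := by
  obtain ⟨Ne, hstrict⟩ := exists_inv_strict hc4 hbij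
  obtain ⟨hmem, a, b, hab⟩ := hγ
  set w0 := gradY c xb yh with hw0
  have ha : a = w0 := by
    have h := hab 0 ⟨le_refl 0, zero_le_one⟩
    rw [hγ0] at h
    simpa using h.symm
  set linv := hstrict.localInverse _ _ _ with hlinvdef
  set σ : ℝ → Euc d := fun t => linv (w0 + t • b) with hσdef
  have hσ0 : σ 0 = xb := by
    simp only [hσdef, zero_smul, add_zero]
    exact hstrict.localInverse_apply_image
  -- derivative of the affine path
  have haff : HasDerivAt (fun t : ℝ => w0 + t • b) b 0 := by
    simpa using ((hasDerivAt_id (0:ℝ)).smul_const b).const_add w0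
  have h00 : w0 + (0:ℝ) • b = w0 := by simp
  have hlinv : HasFDerivAt linv (Ne.symm : Euc d →L[ℝ] Euc d) (w0 + (0:ℝ) • b) := by
    rw [h00]
    exact hstrict.to_localInverse.hasFDerivAt
  have hσd : HasDerivAt σ (Ne.symm b) 0 := by
    have h := hlinv.comp_hasDerivAt 0 haff
    exact h
  have hφ' : HasFDerivAt φ (0 : Euc d →L[ℝ] ℝ) (σ 0) := by rw [hσ0]; exact hφ
  have hψd : HasDerivAt (fun t => φ (σ t)) 0 0 := by
    simpa [Function.comp_def] using hφ'.comp_hasDerivAt 0 hσd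
  have hslope : Tendsto (slope (fun t => φ (σ t)) 0) (𝓝[>] (0:ℝ)) (𝓝 0) :=
    (hasDerivAt_iff_tendsto_slope.mp hψd).mono_left
      (nhdsWithin_mono 0 (fun t ht => Set.mem_compl_singleton_iff.mpr (ne_of_gt ht)))
  -- eventual properties of σ
  have hσc : ContinuousAt σ 0 := by
    apply ContinuousAt.comp (x := (0:ℝ)) (g := linv) (f := fun t : ℝ => w0 + t • b)
    · rw [h00]; exact hstrict.localInverse_continuousAt
    · exact (continuous_const.add (continuous_id.smul continuous_const)).continuousAt
  have hev1 : ∀ᶠ t in 𝓝 (0:ℝ), σ t ∈ X := by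
    have : X ∈ 𝓝 (σ 0) := hX.mem_nhds (by rw [hσ0]; exact hxbX)
    exact hσc.eventually_mem this
  have hev2 : ∀ᶠ t in 𝓝 (0:ℝ), gradY c (σ t) yh = w0 + t • b := by
    have hcont : Continuous (fun t : ℝ => w0 + t • b) := by fun_prop
    have ht : Tendsto (fun t : ℝ => w0 + t • b) (𝓝 0) (𝓝 w0) := by
      have := hcont.continuousAt (x := (0:ℝ))
      rwa [ContinuousAt, h00] at this
    exact ht.eventually hstrict.eventually_right_inverse
  have hev := hev1.and hev2
  rw [Metric.eventually_nhds_iff] at hev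
  obtain ⟨ε, hεpos, hεp⟩ := hev
  set δ := min (ε/2) (1/2) with hδdef
  have hδpos : 0 < δ := lt_min (by linarith) (by norm_num)
  have hδlt1 : δ < 1 := lt_of_le_of_lt (min_le_right _ _) (by norm_num)
  have hprop : ∀ t : ℝ, 0 ≤ t → t ≤ δ → σ t ∈ X ∧ gradY c (σ t) yh = w0 + t • b := by
    intro t ht0 htδ
    apply hεp
    rw [Real.dist_eq, sub_zero, abs_of_nonneg ht0]
    calc t ≤ δ := htδ
      _ ≤ ε/2 := min_le_left _ _
      _ < ε := by linarith
  set Γ : ℝ → Euc d := fun s => if s ≤ δ then σ s else γ s with hΓdef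
  have hΓ0 : Γ 0 = xb := by
    simp only [hΓdef]
    rw [if_pos hδpos.le]
    exact hσ0
  have hΓseg : IsHorizCSeg X c Γ yh := by
    constructor
    · intro s hs
      simp only [hΓdef]
      by_cases h : s ≤ δ
      · rw [if_pos h]; exact (hprop s hs.1 h).1
      · rw [if_neg h]; exact hmem s hs
    · refine ⟨a, b, fun s hs => ?_⟩
      simp only [hΓdef]
      by_cases h : s ≤ δ
      · rw [if_pos h, (hprop s hs.1 h).2, ha]
      · rw [if_neg h]; exact hab s hs
  have hH := hconv Γ hΓseg hΓ0
  have hΓ1 : Γ 1 = γ 1 := by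
    simp only [hΓdef]
    rw [if_neg (by linarith)]
  -- slope bound from convexity
  have hbound : ∀ᶠ t in 𝓝[>] (0:ℝ),
      slope (fun t => φ (σ t)) 0 t ≤ φ (Γ 1) - φ (Γ 0) := by
    filter_upwards [Ioc_mem_nhdsGT_of_mem (Set.left_mem_Ico.mpr hδpos)] with t ht
    obtain ⟨ht0, htδ⟩ := ht
    have htIcc : t ∈ Set.Icc (0:ℝ) 1 := ⟨ht0.le, le_trans htδ hδlt1.le⟩
    have hcv := hH.2 (Set.left_mem_Icc.mpr zero_le_one) (Set.right_mem_Icc.mpr zero_le_one)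
      (by linarith : (0:ℝ) ≤ 1 - t) ht0.le (by ring)
    have hteq : (1 - t) • (0:ℝ) + t • (1:ℝ) = t := by rw [smul_eq_mul, smul_eq_mul]; ring
    rw [hteq] at hcv
    have hΓt : Γ t = σ t := by simp only [hΓdef]; rw [if_pos htδ]
    have hΓ0' : Γ 0 = σ 0 := by simp only [hΓdef]; rw [if_pos hδpos.le]
    rw [slope_def_field, sub_zero, div_le_iff₀ ht0]
    have e1 : φ (Γ t) = φ (σ t) := by rw [hΓt]
    have e2 : φ (Γ 0) = φ (σ 0) := by rw [hΓ0']
    have hcv' : φ (Γ t) ≤ (1-t) * φ (Γ 0) + t * φ (Γ 1) := by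
      simpa [smul_eq_mul] using hcv
    nlinarith [hcv']
  have hfinal : (0:ℝ) ≤ φ (Γ 1) - φ (Γ 0) := le_of_tendsto hslope hbound
  rw [hΓ1, hΓ0] at hfinal
  linarith

end AuxProofs

/-- **Semi-local criterion for cross-concavity.**
Let `c` satisfy (A2) and (A4a) and have nonnegative cross-curvature, and let `g`
be differentiable. (i) If `t ↦ g (γ t)` is convex along every horizontal
`c`-segment `(γ, ŷ)` with `∇ₓ c (γ 0, ŷ) = -∇g (γ 0)`, then `-g` is
`c`-cross-concave. (ii) For `λ > 0`, if `t ↦ g (γ t) - λ c (γ t, y)` is convex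
on the same `c`-segments, then `-g` is λ-strongly `c`-cross-concave. -/
theorem semilocal_criterion_cross_concavity {d : ℕ}
    (X Y : Set (Euc d)) (hX : IsOpen X) (hY : IsOpen Y)
    (hXne : X.Nonempty) (hYne : Y.Nonempty)
    (c : Euc d → Euc d → ℝ) (g : Euc d → ℝ)
    (hc4 : ContDiff ℝ 4 (Function.uncurry c))
    (hg : Differentiable ℝ g)
    (hA2a : ∀ x ∈ X, ∀ y ∈ Y,
      Function.Bijective (fderiv ℝ (fun y' => gradX c x y') y))
    (hA2bH : ∀ x ∈ X, ∀ x' ∈ X, ∀ y ∈ Y,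
      ∃ γ : ℝ → Euc d, IsHorizCSeg X c γ y ∧ γ 0 = x ∧ γ 1 = x')
    (hA2bV : ∀ y ∈ Y, ∀ y' ∈ Y, ∀ x ∈ X,
      ∃ γ : ℝ → Euc d, IsVertCSeg Y c x γ ∧ γ 0 = y ∧ γ 1 = y')
    (hA4a : ∀ y ∈ Y, ∃! x, x ∈ X ∧ ∀ x' ∈ X, c x y ≤ c x' y)
    (hcc : NonnegCrossCurv X Y c) :
    -- (i)  -g is c-cross-concave
    ((∀ yh ∈ Y, ∀ γ : ℝ → Euc d, IsHorizCSeg X c γ yh →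
        gradX c (γ 0) yh = -gradient g (γ 0) →
        ConvexOn ℝ (Set.Icc (0 : ℝ) 1) (fun t => g (γ t))) →
      ∀ x ∈ X, ∀ xb ∈ X, ∀ yb ∈ Y, ∀ yh ∈ Y,
        gradX c xb yb = 0 → gradX c xb yh = -gradient g xb →
        -g x ≤ -g xb + crossDiff c x yb xb yh) ∧
    -- (ii)  -g is λ-strongly c-cross-concave
    (∀ lam : ℝ, 0 < lam →
      (∀ yh ∈ Y, ∀ y ∈ Y, ∀ γ : ℝ → Euc d, IsHorizCSeg X c γ yh →
        gradX c (γ 0) yh = -gradient g (γ 0) →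
        ConvexOn ℝ (Set.Icc (0 : ℝ) 1) (fun t => g (γ t) - lam * c (γ t) y)) →
      ∀ x ∈ X, ∀ xb ∈ X, ∀ yb ∈ Y, ∀ yh ∈ Y,
        gradX c xb yb = 0 → gradX c xb yh = -gradient g xb →
        -g x ≤ -g xb + crossDiff c x yb xb yh - lam * (c x yb - c xb yb)) := by
  constructor
  · intro hyp x hx xb hxb yb hyb yh hyh hgb hgh
    obtain ⟨γ, hγseg, hγ0, hγ1⟩ := hA2bH xb hxb x hx yh hyh
    have hgd : HasFDerivAt g (fderiv ℝ g xb) xb := (hg xb).hasFDerivAt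
    have hybd : HasFDerivAt (fun z => c z yb) (0 : Euc d →L[ℝ] ℝ) xb := by
      have h1 := (myFDerivFst hc4 xb yb).differentiableAt.hasGradientAt
      rw [show gradient (fun z => c z yb) xb = (0 : Euc d) from hgb] at h1
      simpa using h1.hasFDerivAt
    have hyhd : HasFDerivAt (fun z => c z yh) (-(fderiv ℝ g xb)) xb := by
      have h1 := (myFDerivFst hc4 xb yh).differentiableAt.hasGradientAt
      rw [show gradient (fun z => c z yh) xb = -gradient g xb from hgh] at h1
      have h2 := h1.hasFDerivAt
      have h3 : (InnerProductSpace.toDual ℝ (Euc d)) (-gradient g xb) = -(fderiv ℝ g xb) := by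
        rw [map_neg, gradient, LinearIsometryEquiv.apply_symm_apply]
      rwa [h3] at h2
    set φ : Euc d → ℝ := fun z => g z + c z yh - c z yb with hφdef
    have hφ : HasFDerivAt φ (0 : Euc d →L[ℝ] ℝ) xb := by
      have := (hgd.add hyhd).sub hybd
      have e : φ = (g + fun z => c z yh) - fun z => c z yb := rfl
      rw [e]
      simpa using this
    have hkey := key_mono hX hc4 hxb (hA2a xb hxb yh hyh) hφ hγseg hγ0 ?_
    · rw [hγ1] at hkey
      simp only [hφdef] at hkey
      simp only [crossDiff]
      linarith
    · intro Γ hΓ hΓ0'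
      have h1 := hyp yh hyh Γ hΓ (by rw [hΓ0']; exact hgh)
      have h2 := hcc yh hyh yb hyb Γ hΓ
      have h3 := h1.add h2
      have heq : (fun s => φ (Γ s)) =
          (fun t => g (Γ t)) + (fun s => -c (Γ s) yb + c (Γ s) yh) := by
        funext s
        simp only [hφdef, Pi.add_apply]
        ring
      rw [heq]
      exact h3
  · intro lam hlam hyp x hx xb hxb yb hyb yh hyh hgb hgh
    obtain ⟨γ, hγseg, hγ0, hγ1⟩ := hA2bH xb hxb x hx yh hyh
    have hgd : HasFDerivAt g (fderiv ℝ g xb) xb := (hg xb).hasFDerivAt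
    have hybd : HasFDerivAt (fun z => c z yb) (0 : Euc d →L[ℝ] ℝ) xb := by
      have h1 := (myFDerivFst hc4 xb yb).differentiableAt.hasGradientAt
      rw [show gradient (fun z => c z yb) xb = (0 : Euc d) from hgb] at h1
      simpa using h1.hasFDerivAt
    have hyhd : HasFDerivAt (fun z => c z yh) (-(fderiv ℝ g xb)) xb := by
      have h1 := (myFDerivFst hc4 xb yh).differentiableAt.hasGradientAt
      rw [show gradient (fun z => c z yh) xb = -gradient g xb from hgh] at h1
      have h2 := h1.hasFDerivAt
      have h3 : (InnerProductSpace.toDual ℝ (Euc d)) (-gradient g xb) = -(fderiv ℝ g xb) := by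
        rw [map_neg, gradient, LinearIsometryEquiv.apply_symm_apply]
      rwa [h3] at h2
    set φ : Euc d → ℝ := fun z => (g z - lam * c z yb) + (c z yh - c z yb) with hφdef
    have hφ : HasFDerivAt φ (0 : Euc d →L[ℝ] ℝ) xb := by
      have := (hgd.sub (hybd.const_mul lam)).add (hyhd.sub hybd)
      have e : φ = (g - fun y => lam * c y yb) + ((fun z => c z yh) - fun z => c z yb) := rfl
      rw [e]
      simpa using this
    have hkey := key_mono hX hc4 hxb (hA2a xb hxb yh hyh) hφ hγseg hγ0 ?_
    · rw [hγ1] at hkey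
      simp only [hφdef] at hkey
      simp only [crossDiff]
      linarith
    · intro Γ hΓ hΓ0'
      have h1 := hyp yh hyh yb hyb Γ hΓ (by rw [hΓ0']; exact hgh)
      have h2 := hcc yh hyh yb hyb Γ hΓ
      have h3 := h1.add h2
      have heq : (fun s => φ (Γ s)) =
          (fun t => g (Γ t) - lam * c (Γ t) yb) + (fun s => -c (Γ s) yb + c (Γ s) yh) := by
        funext s
        simp only [hφdef, Pi.add_apply]
        ring
      rw [heq]
      exact h3
end

section
/- Sublinear rate for forward–backward splitting with a general cost: suppose f, g, c are differentiable, assumption (A5) holds, f is c-concave and c-cross-convex, and −g is c-cross-concave. Let F = f + g, fix x_0 ∈ X and ȳ_0 ∈ argmin_{y∈Y} c(x_0,y), and define iterates by y_{n+1} = argmin_{y∈Y} c(x_n,y)+f^c(y) and x_{n+1} = argmin_{x∈X} c(x,y_{n+1})+g(x). Then for every x ∈ X and every n ≥ 1, F(x_n) ≤ F(x) + c(x,ȳ_0)/n. -/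
open Set

/-- **Sublinear rate for forward–backward splitting with a general cost.**
Suppose `f, g, c` are differentiable, assumption (A5) holds, `f` is `c`-concave
and `c`-cross-convex, and `-g` is `c`-cross-concave. With `F = f + g`, `x 0 ∈ X`,
`ȳ₀ ∈ argmin_{y∈Y} c (x 0) y`, and the forward–backward iterates
`y (n+1) = argmin_{y∈Y} c (x n) y + fc y`,
`x (n+1) = argmin_{x∈X} c x (y (n+1)) + g x`, one has for every `z ∈ X`, `n ≥ 1`:
`F (x n) ≤ F z + c z ȳ₀ / n`. -/
theorem forward_backward_sublinear_rate {d : ℕ}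
    (X Y : Set (Euc d)) (hX : IsOpen X) (hY : IsOpen Y)
    (hXne : X.Nonempty) (hYne : Y.Nonempty)
    (c : Euc d → Euc d → ℝ) (f g : Euc d → ℝ)
    (hc : Differentiable ℝ (Function.uncurry c))
    (hf : Differentiable ℝ f) (hg : Differentiable ℝ g)
    (fc : Euc d → ℝ)
    (hfc : ∀ y ∈ Y, IsLUB ((fun x => f x - c x y) '' X) (fc y))
    -- f is c-concave
    (hconc : ∀ x ∈ X, IsGLB ((fun y => c x y + fc y) '' Y) (f x))
    -- (A5a)
    (hA5a : ∀ x ∈ X, (∀ y ∈ Y, 0 ≤ c x y) ∧ ∃ y ∈ Y, c x y = 0)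
    -- (A5b)
    (hA5b : ∀ x ∈ X, ∃! y, y ∈ Y ∧ ∀ y' ∈ Y, c x y + fc y ≤ c x y' + fc y')
    -- (A5c)
    (hA5c : ∀ y ∈ Y, ∃! x, x ∈ X ∧ ∀ x' ∈ X, c x y + g x ≤ c x' y + g x')
    -- f is c-cross-convex
    (hccf : ∀ x ∈ X, ∀ xb ∈ X, ∀ yb ∈ Y, ∀ yh ∈ Y,
      gradX c xb yb = 0 → gradX c xb yh = gradient f xb →
      f xb + crossDiff c x yb xb yh ≤ f x)
    -- -g is c-cross-concave
    (hccg : ∀ x ∈ X, ∀ xb ∈ X, ∀ yb ∈ Y, ∀ yh ∈ Y,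
      gradX c xb yb = 0 → gradX c xb yh = -gradient g xb →
      -g x ≤ -g xb + crossDiff c x yb xb yh)
    (x : ℕ → Euc d) (y : ℕ → Euc d) (yb0 : Euc d)
    (hx0 : x 0 ∈ X)
    (hyb0 : yb0 ∈ Y ∧ ∀ y' ∈ Y, c (x 0) yb0 ≤ c (x 0) y')
    (hy : ∀ n, y (n + 1) ∈ Y ∧
      ∀ y' ∈ Y, c (x n) (y (n + 1)) + fc (y (n + 1)) ≤ c (x n) y' + fc y')
    (hxn : ∀ n, x (n + 1) ∈ X ∧
      ∀ x' ∈ X, c (x (n + 1)) (y (n + 1)) + g (x (n + 1)) ≤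
        c x' (y (n + 1)) + g x') :
    ∀ z ∈ X, ∀ n : ℕ, 1 ≤ n →
      f (x n) + g (x n) ≤ (f z + g z) + c z yb0 / (n : ℝ) := by
  -- Differentiability of c in its first variable
  have hcd : ∀ y0 : Euc d, Differentiable ℝ (fun x' => c x' y0) :=
    fun y0 => hc.comp (differentiable_id.prodMk (differentiable_const y0))
  -- gradient via fderiv
  have hgrad_eq : ∀ (φ : Euc d → ℝ) (p : Euc d),
      gradient φ p = (InnerProductSpace.toDual ℝ (Euc d)).symm (fderiv ℝ φ p) :=
    fun _ _ => rfl
  -- local min on open set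
  have hlocmin : ∀ (φ : Euc d → ℝ) (x0 : Euc d), x0 ∈ X → (∀ x' ∈ X, φ x0 ≤ φ x') →
      IsLocalMin φ x0 :=
    fun φ x0 hx0' hm => Filter.eventually_of_mem (hX.mem_nhds hx0') hm
  -- all iterates are in X
  have hxX : ∀ n, x n ∈ X := by
    intro n
    cases n with
    | zero => exact hx0
    | succ k => exact (hxn k).1
  -- the auxiliary sequence yb of argmins of c (x n) ·
  set yb : ℕ → Euc d := fun n =>
    Nat.rec yb0 (fun k _ => Classical.choose (hA5a (x (k+1)) (hxn k).1).2) n with hyb_def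
  have hybY : ∀ n, yb n ∈ Y := by
    intro n
    cases n with
    | zero => exact hyb0.1
    | succ k => exact (Classical.choose_spec (hA5a (x (k+1)) (hxn k).1).2).1
  have hyb0eq : yb 0 = yb0 := rfl
  have hc0 : ∀ n, c (x n) (yb n) = 0 := by
    intro n
    cases n with
    | zero =>
      obtain ⟨y0, hy0Y, hy00⟩ := (hA5a (x 0) hx0).2
      have h1 := hyb0.2 y0 hy0Y
      have h2 := (hA5a (x 0) hx0).1 yb0 hyb0.1
      have : c (x 0) (yb 0) = c (x 0) yb0 := rfl
      rw [this]; linarith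
    | succ k => exact (Classical.choose_spec (hA5a (x (k+1)) (hxn k).1).2).2
  -- lower bound from c-concavity
  have hlb : ∀ x' ∈ X, ∀ y' ∈ Y, f x' ≤ c x' y' + fc y' :=
    fun x' hx' y' hy' => (hconc x' hx').1 ⟨y', hy', rfl⟩
  -- f (x n) equals the minimum value attained at y (n+1)
  have hfeq : ∀ n, f (x n) = c (x n) (y (n+1)) + fc (y (n+1)) := by
    intro n
    refine le_antisymm (hlb _ (hxX n) _ (hy n).1) ?_
    refine (hconc (x n) (hxX n)).2 ?_
    rintro a ⟨y0, hy0, rfl⟩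
    exact (hy n).2 y0 hy0
  -- gradient condition (a): ∇ₓ c (x n) (yb n) = 0
  have hgrad0 : ∀ n, gradX c (x n) (yb n) = 0 := by
    intro n
    have hlm : IsLocalMin (fun x' => c x' (yb n)) (x n) := by
      refine hlocmin _ _ (hxX n) ?_
      intro x' hx'
      simp only [hc0 n]
      exact (hA5a x' hx').1 (yb n) (hybY n)
    have hz := hlm.hasFDerivAt_eq_zero ((hcd (yb n) (x n)).hasFDerivAt)
    show gradient (fun x' => c x' (yb n)) (x n) = 0
    rw [hgrad_eq, hz, map_zero]
  -- gradient condition (b): ∇ₓ c (x n) (y (n+1)) = ∇ f (x n)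
  have hgradf : ∀ n, gradX c (x n) (y (n+1)) = gradient f (x n) := by
    intro n
    set y' := y (n+1)
    have hlm : IsLocalMin (fun x' => c x' y' + fc y' - f x') (x n) := by
      refine hlocmin _ _ (hxX n) ?_
      intro x' hx'
      have h1 := hlb x' hx' y' (hy n).1
      have h2 := hfeq n
      linarith
    have hder : HasFDerivAt (fun x' => c x' y' + fc y' - f x')
        (fderiv ℝ (fun x' => c x' y') (x n) - fderiv ℝ f (x n)) (x n) :=
      (((hcd y' (x n)).hasFDerivAt.add_const (fc y')).sub (hf (x n)).hasFDerivAt)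
    have hz := hlm.hasFDerivAt_eq_zero hder
    have heq : fderiv ℝ (fun x' => c x' y') (x n) = fderiv ℝ f (x n) :=
      sub_eq_zero.mp hz
    show gradient (fun x' => c x' y') (x n) = gradient f (x n)
    rw [hgrad_eq, hgrad_eq, heq]
  -- gradient condition (c): ∇ₓ c (x (n+1)) (y (n+1)) = -∇ g (x (n+1))
  have hgradg : ∀ n, gradX c (x (n+1)) (y (n+1)) = -gradient g (x (n+1)) := by
    intro n
    set y' := y (n+1)
    have hlm : IsLocalMin (fun x' => c x' y' + g x') (x (n+1)) :=
      hlocmin _ _ (hxn n).1 (hxn n).2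
    have hder : HasFDerivAt (fun x' => c x' y' + g x')
        (fderiv ℝ (fun x' => c x' y') (x (n+1)) + fderiv ℝ g (x (n+1))) (x (n+1)) :=
      ((hcd y' (x (n+1))).hasFDerivAt.add (hg (x (n+1))).hasFDerivAt)
    have hz := hlm.hasFDerivAt_eq_zero hder
    have heq : fderiv ℝ (fun x' => c x' y') (x (n+1)) = -fderiv ℝ g (x (n+1)) := by
      have := add_eq_zero_iff_eq_neg.mp hz
      exact this
    show gradient (fun x' => c x' y') (x (n+1)) = -gradient g (x (n+1))
    rw [hgrad_eq, hgrad_eq, heq, map_neg]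
  -- five-point inequality
  have five : ∀ n, ∀ z ∈ X,
      f (x (n+1)) + g (x (n+1)) ≤ f z + g z + c z (yb n) - c z (yb (n+1)) := by
    intro n z hz
    have hI := hccf z hz (x n) (hxX n) (yb n) (hybY n) (y (n+1)) (hy n).1
      (hgrad0 n) (hgradf n)
    have hII := hccg z hz (x (n+1)) (hxn n).1 (yb (n+1)) (hybY (n+1)) (y (n+1))
      (hy n).1 (hgrad0 (n+1)) (hgradg n)
    have hIII := hlb (x (n+1)) (hxn n).1 (y (n+1)) (hy n).1
    have hIV := hfeq n
    have h0a := hc0 n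
    have h0b := hc0 (n+1)
    unfold crossDiff at hI hII
    linarith
  -- descent
  have descent : ∀ n, f (x (n+1)) + g (x (n+1)) ≤ f (x n) + g (x n) := by
    intro n
    have h5 := five n (x n) (hxX n)
    have h0 := hc0 n
    have hge := (hA5a (x n) (hxX n)).1 (yb (n+1)) (hybY (n+1))
    linarith
  -- main telescoping estimate
  intro z hz
  have key : ∀ n : ℕ, (n : ℝ) * (f (x n) + g (x n)) ≤
      (n : ℝ) * (f z + g z) + c z yb0 - c z (yb n) := by
    intro n
    induction n with
    | zero =>
      have h0 : yb 0 = yb0 := rfl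
      rw [h0]
      norm_num
    | succ k ih =>
      have h5 := five k z hz
      have hd := descent k
      have hmul : (k : ℝ) * (f (x (k+1)) + g (x (k+1))) ≤
          (k : ℝ) * (f (x k) + g (x k)) :=
        mul_le_mul_of_nonneg_left hd (Nat.cast_nonneg k)
      push_cast
      nlinarith [hmul, ih, h5]
  intro n hn
  have hnpos : (0 : ℝ) < (n : ℝ) := by exact_mod_cast hn
  have hge := (hA5a z hz).1 (yb n) (hybY n)
  have h2 : (n : ℝ) * (f (x n) + g (x n)) ≤ (n : ℝ) * (f z + g z) + c z yb0 := by
    have := key n; linarith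
  have h3 : f (x n) + g (x n) ≤ ((f z + g z) * (n : ℝ) + c z yb0) / (n : ℝ) := by
    rw [le_div_iff₀ hnpos]
    nlinarith
  have h4 : ((f z + g z) * (n : ℝ) + c z yb0) / (n : ℝ) = f z + g z + c z yb0 / (n : ℝ) := by
    field_simp
  linarith
end

section
/- Linear rate for forward–backward splitting with a general cost: let λ, μ ∈ [0,1) with λ + μ > 0 and set Λ = (1+μ)/(1−λ). Suppose f, g, c are differentiable, assumption (A5) holds, f is c-concave and λ-strongly c-cross-convex, and −g is μ-strongly c-cross-concave. Let F = f + g, fix x_0 ∈ X and ȳ_0 ∈ argmin_{y∈Y} c(x_0,y), and define iterates by y_{n+1} = argmin_{y∈Y} c(x_n,y)+f^c(y) and x_{n+1} = argmin_{x∈X} c(x,y_{n+1})+g(x). Then for every x ∈ X and every n ≥ 1, F(x_n) ≤ F(x) + (λ+μ)·c(x,ȳ_0)/(Λ^n − 1). -/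
open Set

lemma fb_fderiv_min {d : ℕ} {φ : Euc d → ℝ} {X : Set (Euc d)} (hX : IsOpen X)
    {x0 : Euc d} (hx0 : x0 ∈ X) (h : ∀ x ∈ X, φ x0 ≤ φ x) :
    fderiv ℝ φ x0 = 0 :=
  IsLocalMin.fderiv_eq_zero (Filter.eventually_of_mem (hX.mem_nhds hx0) h)

lemma fb_grad_zero {d : ℕ} {φ : Euc d → ℝ} {X : Set (Euc d)} (hX : IsOpen X)
    {x0 : Euc d} (hx0 : x0 ∈ X) (h : ∀ x ∈ X, φ x0 ≤ φ x) :
    gradient φ x0 = 0 := by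
  unfold gradient
  rw [fb_fderiv_min hX hx0 h]
  exact map_zero _

lemma fb_grad_eq {d : ℕ} {φ ψ : Euc d → ℝ} {X : Set (Euc d)} (hX : IsOpen X)
    {x0 : Euc d} (hx0 : x0 ∈ X) (hφ : DifferentiableAt ℝ φ x0)
    (hψ : DifferentiableAt ℝ ψ x0)
    (h : ∀ x ∈ X, φ x0 - ψ x0 ≤ φ x - ψ x) :
    gradient φ x0 = gradient ψ x0 := by
  have h0 : fderiv ℝ (fun x => φ x - ψ x) x0 = 0 := fb_fderiv_min hX hx0 h
  rw [fderiv_fun_sub hφ hψ, sub_eq_zero] at h0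
  unfold gradient
  rw [h0]

lemma fb_grad_neg {d : ℕ} {φ ψ : Euc d → ℝ} {X : Set (Euc d)} (hX : IsOpen X)
    {x0 : Euc d} (hx0 : x0 ∈ X) (hφ : DifferentiableAt ℝ φ x0)
    (hψ : DifferentiableAt ℝ ψ x0)
    (h : ∀ x ∈ X, φ x0 + ψ x0 ≤ φ x + ψ x) :
    gradient φ x0 = -gradient ψ x0 := by
  have h0 : fderiv ℝ (fun x => φ x + ψ x) x0 = 0 := fb_fderiv_min hX hx0 h
  rw [fderiv_fun_add hφ hψ] at h0
  have h1 : fderiv ℝ φ x0 = -fderiv ℝ ψ x0 := by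
    rw [eq_neg_iff_add_eq_zero]; exact h0
  unfold gradient
  rw [h1, map_neg]

/-- **Linear rate for forward–backward splitting with a general cost.**
Let `λ, μ ∈ [0,1)` with `λ + μ > 0` and `Λ = (1+μ)/(1-λ)`. Suppose `f, g, c` are
differentiable, (A5) holds, `f` is `c`-concave and λ-strongly `c`-cross-convex,
and `-g` is μ-strongly `c`-cross-concave. With `F = f + g`, `x 0 ∈ X`,
`ȳ₀ ∈ argmin_{y∈Y} c (x 0) y` and the forward–backward iterates, for every
`z ∈ X` and `n ≥ 1`: `F (x n) ≤ F z + (λ+μ) c z ȳ₀ / (Λ^n - 1)`. -/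
theorem forward_backward_linear_rate {d : ℕ}
    (X Y : Set (Euc d)) (hX : IsOpen X) (hY : IsOpen Y)
    (hXne : X.Nonempty) (hYne : Y.Nonempty)
    (lam mu : ℝ) (hlam : 0 ≤ lam) (hlam1 : lam < 1)
    (hmu : 0 ≤ mu) (hmu1 : mu < 1) (hlm : 0 < lam + mu)
    (c : Euc d → Euc d → ℝ) (f g : Euc d → ℝ)
    (hc : Differentiable ℝ (Function.uncurry c))
    (hf : Differentiable ℝ f) (hg : Differentiable ℝ g)
    (fc : Euc d → ℝ)
    (hfc : ∀ y ∈ Y, IsLUB ((fun x => f x - c x y) '' X) (fc y))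
    -- f is c-concave
    (hconc : ∀ x ∈ X, IsGLB ((fun y => c x y + fc y) '' Y) (f x))
    -- (A5a)
    (hA5a : ∀ x ∈ X, (∀ y ∈ Y, 0 ≤ c x y) ∧ ∃ y ∈ Y, c x y = 0)
    -- (A5b)
    (hA5b : ∀ x ∈ X, ∃! y, y ∈ Y ∧ ∀ y' ∈ Y, c x y + fc y ≤ c x y' + fc y')
    -- (A5c)
    (hA5c : ∀ y ∈ Y, ∃! x, x ∈ X ∧ ∀ x' ∈ X, c x y + g x ≤ c x' y + g x')
    -- f is λ-strongly c-cross-convex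
    (hccf : ∀ x ∈ X, ∀ xb ∈ X, ∀ yb ∈ Y, ∀ yh ∈ Y,
      gradX c xb yb = 0 → gradX c xb yh = gradient f xb →
      f xb + crossDiff c x yb xb yh + lam * (c x yb - c xb yb) ≤ f x)
    -- -g is μ-strongly c-cross-concave
    (hccg : ∀ x ∈ X, ∀ xb ∈ X, ∀ yb ∈ Y, ∀ yh ∈ Y,
      gradX c xb yb = 0 → gradX c xb yh = -gradient g xb →
      -g x ≤ -g xb + crossDiff c x yb xb yh - mu * (c x yb - c xb yb))
    (x : ℕ → Euc d) (y : ℕ → Euc d) (yb0 : Euc d)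
    (hx0 : x 0 ∈ X)
    (hyb0 : yb0 ∈ Y ∧ ∀ y' ∈ Y, c (x 0) yb0 ≤ c (x 0) y')
    (hy : ∀ n, y (n + 1) ∈ Y ∧
      ∀ y' ∈ Y, c (x n) (y (n + 1)) + fc (y (n + 1)) ≤ c (x n) y' + fc y')
    (hxn : ∀ n, x (n + 1) ∈ X ∧
      ∀ x' ∈ X, c (x (n + 1)) (y (n + 1)) + g (x (n + 1)) ≤
        c x' (y (n + 1)) + g x') :
    ∀ z ∈ X, ∀ n : ℕ, 1 ≤ n →
      f (x n) + g (x n) ≤ (f z + g z) +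
        (lam + mu) * c z yb0 / (((1 + mu) / (1 - lam)) ^ n - 1) := by
  intro z hz n hn
  -- membership of iterates
  have hxm : ∀ m, x m ∈ X := by
    intro m
    cases m with
    | zero => exact hx0
    | succ k => exact (hxn k).1
  -- differentiability of c in the first variable
  have hcx : ∀ y0 : Euc d, Differentiable ℝ (fun x' => c x' y0) := fun y0 =>
    hc.comp (differentiable_id.prodMk (differentiable_const y0))
  -- choice of the points ȳ_m with c (x m) ȳ_m = 0
  have hzero : ∀ m, ∃ yy, yy ∈ Y ∧ c (x m) yy = 0 := by
    intro m
    obtain ⟨yy, h1, h2⟩ := (hA5a (x m) (hxm m)).2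
    exact ⟨yy, h1, h2⟩
  choose w hwY hwc using hzero
  set yb : ℕ → Euc d := fun m => if m = 0 then yb0 else w m with hybdef
  have hyb00 : yb 0 = yb0 := rfl
  have hybY : ∀ m, yb m ∈ Y := by
    intro m
    cases m with
    | zero => exact hyb0.1
    | succ k => exact hwY (k + 1)
  have hybc : ∀ m, c (x m) (yb m) = 0 := by
    intro m
    cases m with
    | zero =>
      have h1 : c (x 0) yb0 ≤ c (x 0) (w 0) := hyb0.2 (w 0) (hwY 0)
      have h2 : 0 ≤ c (x 0) yb0 := (hA5a (x 0) hx0).1 yb0 hyb0.1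
      have h3 := hwc 0
      show c (x 0) yb0 = 0
      linarith
    | succ k => exact hwc (k + 1)
  -- value identity from c-concavity
  have hfle : ∀ x' ∈ X, ∀ m, f x' ≤ c x' (y (m + 1)) + fc (y (m + 1)) := by
    intro x' hx' m
    exact (hconc x' hx').1 (Set.mem_image_of_mem _ (hy m).1)
  have hfeq : ∀ m, f (x m) = c (x m) (y (m + 1)) + fc (y (m + 1)) := by
    intro m
    have h1 := hfle (x m) (hxm m) m
    have h2 : c (x m) (y (m + 1)) + fc (y (m + 1)) ≤ f (x m) := by
      apply (hconc (x m) (hxm m)).2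
      rintro v ⟨yy, hyy, rfl⟩
      exact (hy m).2 yy hyy
    linarith
  -- first-order conditions
  have hg1 : ∀ m, gradX c (x m) (yb m) = 0 := by
    intro m
    apply fb_grad_zero hX (hxm m)
    intro x' hx'
    show c (x m) (yb m) ≤ c x' (yb m)
    have := (hA5a x' hx').1 (yb m) (hybY m)
    linarith [hybc m]
  have hg2 : ∀ m, gradX c (x m) (y (m + 1)) = gradient f (x m) := by
    intro m
    apply fb_grad_eq hX (hxm m) ((hcx (y (m + 1))) (x m)) (hf (x m))
    intro x' hx'
    show c (x m) (y (m + 1)) - f (x m) ≤ c x' (y (m + 1)) - f x'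
    have h1 := hfeq m
    have h2 := hfle x' hx' m
    linarith
  have hg3 : ∀ m, gradX c (x (m + 1)) (y (m + 1)) = -gradient g (x (m + 1)) := by
    intro m
    apply fb_grad_neg hX (hxm (m + 1)) ((hcx (y (m + 1))) (x (m + 1))) (hg (x (m + 1)))
    intro x' hx'
    exact (hxn m).2 x' hx'
  -- the key one-step inequality
  have hstar : ∀ zz ∈ X, ∀ m,
      f (x (m + 1)) + g (x (m + 1)) + (1 + mu) * c zz (yb (m + 1)) ≤
        f zz + g zz + (1 - lam) * c zz (yb m) := by
    intro zz hzz m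
    have hI := hccf zz hzz (x m) (hxm m) (yb m) (hybY m) (y (m + 1)) (hy m).1
      (hg1 m) (hg2 m)
    have hII := hccg zz hzz (x (m + 1)) (hxm (m + 1)) (yb (m + 1)) (hybY (m + 1))
      (y (m + 1)) (hy m).1 (hg1 (m + 1)) (hg3 m)
    have e1 := hybc m
    have e2 := hybc (m + 1)
    have e1' : lam * c (x m) (yb m) = 0 := by rw [e1]; ring
    have e2' : mu * c (x (m + 1)) (yb (m + 1)) = 0 := by rw [e2]; ring
    have e3 := hfeq m
    have e4 : f (x (m + 1)) ≤ c (x (m + 1)) (y (m + 1)) + fc (y (m + 1)) :=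
      hfle (x (m + 1)) (hxm (m + 1)) m
    simp only [crossDiff] at hI hII
    nlinarith [hI, hII]
  -- monotonicity of F along iterates
  have hmono : ∀ m, f (x (m + 1)) + g (x (m + 1)) ≤ f (x m) + g (x m) := by
    intro m
    have h := hstar (x m) (hxm m) m
    have h0 : (1 - lam) * c (x m) (yb m) = 0 := by rw [hybc m]; ring
    have h1 : 0 ≤ c (x m) (yb (m + 1)) := (hA5a (x m) (hxm m)).1 _ (hybY (m + 1))
    nlinarith [h, mul_nonneg (by linarith : (0:ℝ) ≤ 1 + mu) h1]
  -- the rate parameter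
  set L : ℝ := (1 + mu) / (1 - lam) with hLdef
  have h1l : (0:ℝ) < 1 - lam := by linarith
  have hL1 : 1 < L := (one_lt_div h1l).2 (by linarith)
  have hL0 : 0 < L := by linarith
  have hLmul : L * (1 - lam) = 1 + mu := div_mul_cancel₀ _ (ne_of_gt h1l)
  set S : ℕ → ℝ := fun m => ∑ k ∈ Finset.range m, L ^ (k + 1) with hSdef
  have hSrec : ∀ m, S (m + 1) = S m + L ^ (m + 1) := fun m =>
    Finset.sum_range_succ _ _
  have hSnonneg : ∀ m, 0 ≤ S m := fun m =>
    Finset.sum_nonneg fun i _ => le_of_lt (pow_pos hL0 _)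
  -- main induction
  have hQ : ∀ m, (1 + mu) * L ^ m * c z (yb m) +
      S m * (f (x m) + g (x m) - (f z + g z)) ≤ (1 + mu) * c z (yb 0) := by
    intro m
    induction m with
    | zero => simp [S]
    | succ k ih =>
      have hstark := hstar z hz k
      have hmk := hmono k
      have hSk := hSnonneg k
      have hLp : (0:ℝ) < L ^ (k + 1) := pow_pos hL0 _
      have h1 : L ^ (k + 1) *
          (f (x (k + 1)) + g (x (k + 1)) + (1 + mu) * c z (yb (k + 1))) ≤
          L ^ (k + 1) * (f z + g z + (1 - lam) * c z (yb k)) :=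
        mul_le_mul_of_nonneg_left hstark hLp.le
      have h2 : L ^ (k + 1) * (1 - lam) = L ^ k * (1 + mu) := by
        rw [pow_succ, mul_assoc, hLmul]
      have h2' : L ^ (k + 1) * ((1 - lam) * c z (yb k)) =
          L ^ k * ((1 + mu) * c z (yb k)) := by
        rw [← mul_assoc, h2, mul_assoc]
      have h3 : S k * (f (x (k + 1)) + g (x (k + 1)) - (f z + g z)) ≤
          S k * (f (x k) + g (x k) - (f z + g z)) :=
        mul_le_mul_of_nonneg_left (by linarith) hSk
      rw [hSrec k]
      nlinarith [h1, h2', h3, ih]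
  -- closed form for S
  have hSclosed : ∀ m, (lam + mu) * S m = (1 + mu) * (L ^ m - 1) := by
    intro m
    induction m with
    | zero => simp [S]
    | succ k ih =>
      rw [hSrec k, pow_succ]
      linear_combination ih - L ^ k * hLmul
  -- conclusion
  have hLn1 : 1 < L ^ n := one_lt_pow₀ hL1 (by omega)
  have hbn : 0 ≤ c z (yb n) := (hA5a z hz).1 _ (hybY n)
  have hQn := hQ n
  rw [hyb00] at hQn
  have h5 : S n * (f (x n) + g (x n) - (f z + g z)) ≤ (1 + mu) * c z yb0 := by
    have hterm : 0 ≤ (1 + mu) * L ^ n * c z (yb n) := by positivity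
    linarith
  have h6 : (lam + mu) * (S n * (f (x n) + g (x n) - (f z + g z))) ≤
      (lam + mu) * ((1 + mu) * c z yb0) := mul_le_mul_of_nonneg_left h5 hlm.le
  have h7 : (1 + mu) * ((L ^ n - 1) * (f (x n) + g (x n) - (f z + g z))) ≤
      (1 + mu) * ((lam + mu) * c z yb0) := by
    calc (1 + mu) * ((L ^ n - 1) * (f (x n) + g (x n) - (f z + g z)))
        = (lam + mu) * (S n * (f (x n) + g (x n) - (f z + g z))) := by
          rw [← mul_assoc, ← hSclosed n]; ring
      _ ≤ (lam + mu) * ((1 + mu) * c z yb0) := h6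
      _ = (1 + mu) * ((lam + mu) * c z yb0) := by ring
  have h8 : (L ^ n - 1) * (f (x n) + g (x n) - (f z + g z)) ≤
      (lam + mu) * c z yb0 :=
    le_of_mul_le_mul_left h7 (by linarith)
  rw [← sub_le_iff_le_add', le_div_iff₀ (by linarith : (0:ℝ) < L ^ n - 1)]
  nlinarith [h8]
end

section
/- Five-point property for the forward–backward surrogate: suppose c, f, g are differentiable and assumption (A5) holds. If f is c-concave and c-cross-convex and −g is c-cross-concave, then the function φ(x,y) = c(x,y) + f^c(y) + g(x) satisfies the five-point property (FP). -/
open Set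

/-- **Five-point property for the forward–backward surrogate.**
Suppose `c, f, g` are differentiable and (A5) holds. If `f` is `c`-concave and
`c`-cross-convex and `-g` is `c`-cross-concave, then
`φ(x,y) = c(x,y) + f^c(y) + g(x)` satisfies the five-point property (FP):
for all `x ∈ X`, `y, y0 ∈ Y`, with `x0` the unique minimizer of `φ(·,y0)` over
`X` and `y1` the unique minimizer of `φ(x0,·)` over `Y`,
`φ(x,y1) + φ(x0,y0) ≤ φ(x,y) + φ(x,y0)`. -/
theorem forward_backward_five_point_property {d : ℕ}
    (X Y : Set (Euc d)) (hX : IsOpen X) (hY : IsOpen Y)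
    (hXne : X.Nonempty) (hYne : Y.Nonempty)
    (c : Euc d → Euc d → ℝ) (f g : Euc d → ℝ)
    (hc : Differentiable ℝ (Function.uncurry c))
    (hf : Differentiable ℝ f) (hg : Differentiable ℝ g)
    (fc : Euc d → ℝ)
    (hfc : ∀ y ∈ Y, IsLUB ((fun x => f x - c x y) '' X) (fc y))
    -- f is c-concave
    (hconc : ∀ x ∈ X, IsGLB ((fun y => c x y + fc y) '' Y) (f x))
    -- (A5a)
    (hA5a : ∀ x ∈ X, (∀ y ∈ Y, 0 ≤ c x y) ∧ ∃ y ∈ Y, c x y = 0)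
    -- (A5b)
    (hA5b : ∀ x ∈ X, ∃! y, y ∈ Y ∧ ∀ y' ∈ Y, c x y + fc y ≤ c x y' + fc y')
    -- (A5c)
    (hA5c : ∀ y ∈ Y, ∃! x, x ∈ X ∧ ∀ x' ∈ X, c x y + g x ≤ c x' y + g x')
    -- f is c-cross-convex
    (hccf : ∀ x ∈ X, ∀ xb ∈ X, ∀ yb ∈ Y, ∀ yh ∈ Y,
      gradX c xb yb = 0 → gradX c xb yh = gradient f xb →
      f xb + crossDiff c x yb xb yh ≤ f x)
    -- -g is c-cross-concave
    (hccg : ∀ x ∈ X, ∀ xb ∈ X, ∀ yb ∈ Y, ∀ yh ∈ Y,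
      gradX c xb yb = 0 → gradX c xb yh = -gradient g xb →
      -g x ≤ -g xb + crossDiff c x yb xb yh)
    (φ : Euc d → Euc d → ℝ)
    (hφ : φ = fun x y => c x y + fc y + g x) :
    ∀ x ∈ X, ∀ y ∈ Y, ∀ y0 ∈ Y, ∀ x0, ∀ y1,
      (x0 ∈ X ∧ ∀ x' ∈ X, φ x0 y0 ≤ φ x' y0) →
      (y1 ∈ Y ∧ ∀ y' ∈ Y, φ x0 y1 ≤ φ x0 y') →
      φ x y1 + φ x0 y0 ≤ φ x y + φ x y0 := by

  intro x hx y hy y0 hy0 x0 y1 hx0p hy1p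
  obtain ⟨hx0, hx0min⟩ := hx0p
  obtain ⟨hy1, hy1min⟩ := hy1p
  subst hφ
  simp only at hx0min hy1min ⊢
  -- differentiability of x ↦ c x y
  have hcx : ∀ y' : Euc d, Differentiable ℝ fun x' => c x' y' := fun y' =>
    hc.comp (differentiable_id.prodMk (differentiable_const y'))
  -- f ≤ c(·,y') + fc y' on X
  have hfle : ∀ x' ∈ X, ∀ y' ∈ Y, f x' ≤ c x' y' + fc y' := fun x' hx' y' hy' =>
    (hconc x' hx').1 ⟨y', hy', rfl⟩
  -- f x0 = c x0 y1 + fc y1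
  have hkey : f x0 = c x0 y1 + fc y1 := by
    refine le_antisymm (hfle x0 hx0 y1 hy1) ((hconc x0 hx0).2 ?_)
    rintro z ⟨y', hy', rfl⟩
    have := hy1min y' hy'
    show c x0 y1 + fc y1 ≤ c x0 y' + fc y'
    linarith
  -- choose yb with c x0 yb = 0
  obtain ⟨-, yb, hyb, hcyb⟩ := hA5a x0 hx0
  -- gradient fact 1 : gradX c x0 yb = 0
  have hmin1 : IsLocalMin (fun x' => c x' yb) x0 := by
    filter_upwards [hX.mem_nhds hx0] with x' hx'
    have := (hA5a x' hx').1 yb hyb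
    simpa [hcyb] using this
  have hg1 : gradX c x0 yb = 0 := by
    have : fderiv ℝ (fun x' => c x' yb) x0 = 0 := hmin1.fderiv_eq_zero
    simp [gradX, gradient, this]
  -- gradient fact 2 : gradX c x0 y1 = gradient f x0
  have hg2 : gradX c x0 y1 = gradient f x0 := by
    have hmin2 : IsLocalMin (fun x' => c x' y1 + fc y1 - f x') x0 := by
      filter_upwards [hX.mem_nhds hx0] with x' hx'
      have := hfle x' hx' y1 hy1
      simp only [← hkey]
      linarith
    have hD : HasFDerivAt (fun x' => c x' y1 + fc y1 - f x')
        (fderiv ℝ (fun x' => c x' y1) x0 - fderiv ℝ f x0) x0 :=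
      (((hcx y1) x0).hasFDerivAt.add_const (fc y1)).sub (hf x0).hasFDerivAt
    have h0 := hmin2.hasFDerivAt_eq_zero hD
    have : fderiv ℝ (fun x' => c x' y1) x0 = fderiv ℝ f x0 := by
      have := sub_eq_zero.mp h0
      exact this
    simp [gradX, gradient, this]
  -- gradient fact 3 : gradX c x0 y0 = - gradient g x0
  have hg3 : gradX c x0 y0 = -gradient g x0 := by
    have hmin3 : IsLocalMin (fun x' => c x' y0 + g x') x0 := by
      filter_upwards [hX.mem_nhds hx0] with x' hx'
      have := hx0min x' hx'
      show c x0 y0 + g x0 ≤ c x' y0 + g x'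
      linarith
    have hD : HasFDerivAt (fun x' => c x' y0 + g x')
        (fderiv ℝ (fun x' => c x' y0) x0 + fderiv ℝ g x0) x0 :=
      ((hcx y0) x0).hasFDerivAt.add (hg x0).hasFDerivAt
    have h0 := hmin3.hasFDerivAt_eq_zero hD
    have : fderiv ℝ (fun x' => c x' y0) x0 = -fderiv ℝ g x0 := by
      linear_combination (norm := abel) h0
    simp [gradX, gradient, this]
  have H1 := hccf x hx x0 hx0 yb hyb y1 hy1 hg1 hg2
  have H2 := hccg x hx x0 hx0 yb hyb y0 hy0 hg1 hg3
  have H3 := hfle x hx y hy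
  simp only [crossDiff] at H1 H2
  linarith
end

section
/- Sublinear convergence rate for POCS (alternating projections onto convex sets): let H be a real Hilbert space (e.g. ℝ^d), let B and C be nonempty closed convex subsets of H, and define the iterates from x_0 ∈ B by y_{n+1} = P_C(x_n) and x_{n+1} = P_B(y_{n+1}), where P_B and P_C denote the metric projections onto B and C. Then for every x ∈ B and every n ≥ 1, d_C(x_n)² − d_C(x)² ≤ ‖x − x_0‖²/n, where d_C(z) = inf_{y∈C} ‖z − y‖. In particular, if B ∩ C ≠ ∅, then d_C(x_n)² ≤ ‖x − x_0‖²/n for every x ∈ B ∩ C. -/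
open Metric

local notation "⟪" x ", " y "⟫" => @inner ℝ _ _ x y

private lemma pocs_aux_inner {H : Type*} [NormedAddCommGroup H] [InnerProductSpace ℝ H]
    {K : Set H} (hK : Convex ℝ K) {u v : H} (hv : v ∈ K)
    (hmin : ∀ w ∈ K, ‖u - v‖ ≤ ‖u - w‖) : ∀ w ∈ K, ⟪u - v, w - v⟫ ≤ 0 := by
  haveI : Nonempty K := ⟨⟨v, hv⟩⟩
  have hiInf : ‖u - v‖ = ⨅ w : K, ‖u - (w : H)‖ := by
    apply le_antisymm
    · exact le_ciInf fun w => hmin w w.2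
    · exact ciInf_le ⟨(0:ℝ), Set.forall_mem_range.2 fun _ => norm_nonneg _⟩ (⟨v, hv⟩ : K)
  exact (norm_eq_iInf_iff_real_inner_le_zero hK hv).1 hiInf

private lemma pocs_aux_infDist {H : Type*} [NormedAddCommGroup H] [InnerProductSpace ℝ H]
    {K : Set H} (hne : K.Nonempty) {u v : H} (hv : v ∈ K)
    (hmin : ∀ w ∈ K, ‖u - v‖ ≤ ‖u - w‖) : Metric.infDist u K = ‖u - v‖ := by
  apply le_antisymm
  · rw [← dist_eq_norm]; exact infDist_le_dist_of_mem hv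
  · by_contra hlt
    push_neg at hlt
    obtain ⟨w, hw, hwd⟩ := (Metric.infDist_lt_iff hne).1 hlt
    rw [dist_eq_norm] at hwd
    exact absurd (hmin w hw) (by linarith)

private lemma pocs_aux_key {H : Type*} [NormedAddCommGroup H] [InnerProductSpace ℝ H]
    (u v w z c : H) (h1 : ⟪u - v, c - v⟫ ≤ 0) (h2 : ⟪v - w, z - w⟫ ≤ 0) :
    ‖w - z‖ ^ 2 + ‖w - v‖ ^ 2 ≤ ‖u - z‖ ^ 2 + ‖z - c‖ ^ 2 := by
  have h3 : (0 : ℝ) ≤ ‖(u - v) + (c - z)‖ ^ 2 := by positivity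
  simp only [← real_inner_self_eq_norm_sq, inner_sub_left, inner_sub_right,
    inner_add_left, inner_add_right] at h1 h2 h3 ⊢
  linarith [real_inner_comm u v, real_inner_comm u w, real_inner_comm u z, real_inner_comm u c,
    real_inner_comm v w, real_inner_comm v z, real_inner_comm v c,
    real_inner_comm w z, real_inner_comm w c, real_inner_comm z c]

/-- **Sublinear convergence rate for POCS (alternating projections onto convex
sets).** Let `H` be a real Hilbert space, `B, C` nonempty closed convex subsets
of `H`, and define the iterates from `x 0 ∈ B` by `y (n+1) = P_C (x n)` and
`x (n+1) = P_B (y (n+1))` (encoded as nearest points). Then for every `z ∈ B`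
and every `n ≥ 1`, `d_C (x n)² - d_C (z)² ≤ ‖z - x 0‖²/n`; in particular if
`B ∩ C ≠ ∅` then `d_C (x n)² ≤ ‖z - x 0‖²/n` for every `z ∈ B ∩ C`. -/
theorem pocs_sublinear_rate
    {H : Type*} [NormedAddCommGroup H] [InnerProductSpace ℝ H] [CompleteSpace H]
    (B C : Set H)
    (hBne : B.Nonempty) (hBclosed : IsClosed B) (hBconv : Convex ℝ B)
    (hCne : C.Nonempty) (hCclosed : IsClosed C) (hCconv : Convex ℝ C)
    (x : ℕ → H) (y : ℕ → H)
    (hx0 : x 0 ∈ B)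
    -- y (n+1) is the projection of x n onto C
    (hy : ∀ n, y (n + 1) ∈ C ∧ ∀ y' ∈ C, ‖x n - y (n + 1)‖ ≤ ‖x n - y'‖)
    -- x (n+1) is the projection of y (n+1) onto B
    (hx : ∀ n, x (n + 1) ∈ B ∧ ∀ x' ∈ B, ‖x (n + 1) - y (n + 1)‖ ≤ ‖x' - y (n + 1)‖) :
    (∀ z ∈ B, ∀ n : ℕ, 1 ≤ n →
      Metric.infDist (x n) C ^ 2 - Metric.infDist z C ^ 2 ≤ ‖z - x 0‖ ^ 2 / (n : ℝ)) ∧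
    (∀ z ∈ B ∩ C, ∀ n : ℕ, 1 ≤ n →
      Metric.infDist (x n) C ^ 2 ≤ ‖z - x 0‖ ^ 2 / (n : ℝ)) := by
  have hxB : ∀ n, x n ∈ B := fun n => Nat.rec hx0 (fun n _ => (hx n).1) n
  -- distance to C at x n
  have hfd : ∀ n, Metric.infDist (x n) C = ‖x n - y (n + 1)‖ := fun n =>
    pocs_aux_infDist hCne (hy n).1 (hy n).2
  have hdnonneg : ∀ u : H, 0 ≤ Metric.infDist u C := fun u => Metric.infDist_nonneg
  -- monotonicity
  have hmono : ∀ n, Metric.infDist (x (n + 1)) C ≤ Metric.infDist (x n) C := by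
    intro n
    have h1 : Metric.infDist (x (n + 1)) C ≤ ‖x (n + 1) - y (n + 1)‖ := by
      rw [← dist_eq_norm]; exact infDist_le_dist_of_mem (hy n).1
    have h2 : ‖x (n + 1) - y (n + 1)‖ ≤ ‖x n - y (n + 1)‖ := (hx n).2 _ (hxB n)
    rw [hfd n]; exact h1.trans h2
  have main : ∀ z ∈ B, ∀ n : ℕ, 1 ≤ n →
      Metric.infDist (x n) C ^ 2 - Metric.infDist z C ^ 2 ≤ ‖z - x 0‖ ^ 2 / (n : ℝ) := by
    intro z hz n hn
    -- nearest point of z in C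
    obtain ⟨c, hcC, hcmin⟩ := exists_norm_eq_iInf_of_complete_convex hCne
      (hCclosed.isComplete) hCconv z
    have hcmin' : ∀ w ∈ C, ‖z - c‖ ≤ ‖z - w‖ := by
      intro w hw
      rw [hcmin]
      exact ciInf_le ⟨(0:ℝ), Set.forall_mem_range.2 fun _ => norm_nonneg _⟩ (⟨w, hw⟩ : C)
    have hdz : Metric.infDist z C = ‖z - c‖ := pocs_aux_infDist hCne hcC hcmin'
    -- one-step inequality
    have step : ∀ k, ‖x (k + 1) - z‖ ^ 2 + Metric.infDist (x (k + 1)) C ^ 2 ≤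
        ‖x k - z‖ ^ 2 + Metric.infDist z C ^ 2 := by
      intro k
      have h1 : ⟪x k - y (k + 1), c - y (k + 1)⟫ ≤ 0 :=
        pocs_aux_inner hCconv (hy k).1 (hy k).2 c hcC
      have h2 : ⟪y (k + 1) - x (k + 1), z - x (k + 1)⟫ ≤ 0 := by
        refine pocs_aux_inner hBconv (hx k).1 (fun w hw => ?_) z hz
        rw [norm_sub_rev, norm_sub_rev (y (k + 1))]
        exact (hx k).2 w hw
      have h4 : Metric.infDist (x (k + 1)) C ≤ ‖x (k + 1) - y (k + 1)‖ := by
        rw [← dist_eq_norm]; exact infDist_le_dist_of_mem (hy k).1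
      have h4' : Metric.infDist (x (k + 1)) C ^ 2 ≤ ‖x (k + 1) - y (k + 1)‖ ^ 2 :=
        pow_le_pow_left₀ (hdnonneg _) h4 2
      have hkey := pocs_aux_key (x k) (y (k + 1)) (x (k + 1)) z c h1 h2
      rw [hdz]
      linarith
    -- telescoping by induction
    have tele : ∀ m : ℕ, (m : ℝ) * (Metric.infDist (x m) C ^ 2 - Metric.infDist z C ^ 2)
        + ‖x m - z‖ ^ 2 ≤ ‖x 0 - z‖ ^ 2 := by
      intro m
      induction m with
      | zero => simp
      | succ m ih =>
        have hm2 : Metric.infDist (x (m + 1)) C ^ 2 ≤ Metric.infDist (x m) C ^ 2 :=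
          pow_le_pow_left₀ (hdnonneg _) (hmono m) 2
        have hcast : (0 : ℝ) ≤ (m : ℝ) := Nat.cast_nonneg m
        have := step m
        push_cast
        nlinarith
    have hnpos : (0 : ℝ) < (n : ℝ) := by exact_mod_cast hn
    have h := tele n
    rw [norm_sub_rev, le_div_iff₀ hnpos]
    nlinarith [sq_nonneg ‖x n - z‖]
  refine ⟨main, fun z hz n hn => ?_⟩
  have h := main z hz.1 n hn
  rw [Metric.infDist_zero_of_mem hz.2] at h
  simpa using h
end
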